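/- arXiv:2201.05954 — 6 statements merged into one kernel-verified Lean document; each statement's English description precedes it below -/
import Mathlib

section
/- The partial word 0^m ⋄ 0^n (m zeros, a hole, then n zeros) contains exactly ⌊(m+n+1)/2⌋ distinct full-word squares compatible with its factors, where the hole ⋄ matches any letter. -/
/-- A full binary word `u` is compatible with a partial word `v`
(over `Option Bool`, where `none` is the hole). -/
def Compat (u : List Bool) (v : List (Option Bool)) : Prop :=
  u.length = v.length ∧
    ∀ i, i < u.length → ∀ b : Bool, v.getD i none = some b → u.getD i false = b

/-- The set of distinct full-word squares `x ++ x` compatible with a factor of `w`. -/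
def SqSet (w : List (Option Bool)) : Set (List Bool) :=
  {u | ∃ x : List Bool, x ≠ [] ∧ u = x ++ x ∧ ∃ v, v <:+: w ∧ Compat u v}

/-- A full binary word of even positive length `2n` with `u[i] ≠ u[n+i]` for all `i < n`. -/
def IsAntisquare (u : List Bool) : Prop :=
  u ≠ [] ∧ u.length % 2 = 0 ∧
    ∀ i, i < u.length / 2 → u.getD i false ≠ u.getD (u.length / 2 + i) false

/-- The set of distinct antisquares occurring as (hole-free) factors of `w`. -/
def AntiSet (w : List (Option Bool)) : Set (List Bool) :=
  {u | IsAntisquare u ∧ u.map some <:+: w}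

/-- `w` contains exactly one hole. -/
def OneHole (w : List (Option Bool)) : Prop := w.count none = 1

private lemma mem_w {m n : ℕ} {a : Option Bool}
    (h : a ∈ List.replicate m (some false) ++ [none] ++ List.replicate n (some false)) :
    a = some false ∨ a = none := by
  simp only [List.mem_append, List.mem_replicate, List.mem_singleton] at h
  tauto

private lemma hole_pos {m n : ℕ} {i : ℕ}
    (hi : i < m + 1 + n)
    (h : (List.replicate m (some false) ++ [none] ++
      List.replicate n (some false)).getD i none = none) : i = m := by
  rcases lt_trichotomy i m with hlt | heq | hgt
  · exfalso
    rw [List.getD_append _ _ _ _ (by simp; omega),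
        List.getD_append _ _ _ _ (by simpa using hlt),
        List.getD_eq_getElem _ _ (by simpa using hlt)] at h
    simp at h
  · exact heq
  · exfalso
    rw [List.getD_append_right _ _ _ _ (by simp; omega)] at h
    rw [List.getD_eq_getElem _ _ (by simp; omega)] at h
    simp at h

private lemma sq_mem_iff (m n : ℕ) (u : List Bool) :
    u ∈ SqSet (List.replicate m (some false) ++ [none] ++
      List.replicate n (some false)) ↔
    ∃ j, 1 ≤ j ∧ 2 * j ≤ m + n + 1 ∧ u = List.replicate (2 * j) false := by
  set w : List (Option Bool) := List.replicate m (some false) ++ [none] ++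
      List.replicate n (some false) with hw
  have hwlen : w.length = m + 1 + n := by simp [hw]; omega
  constructor
  · rintro ⟨x, hx, rfl, v, hinf, hlen, hc⟩
    have hxpos : 0 < x.length := List.length_pos_iff.mpr hx
    have hvlen : v.length = 2 * x.length := by
      simp only [List.length_append] at hlen; omega
    obtain ⟨s, t, hst⟩ := hinf
    -- any true position k in x++x forces s.length + k = m
    have key : ∀ k, k < 2 * x.length → (x ++ x).getD k false = true →
        s.length + k = m := by
      intro k hk htrue
      have hkv : k < v.length := by omega
      have hvk : v.getD k none = none := by
        rw [List.getD_eq_getElem _ _ hkv]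
        have hvm : v[k] ∈ w := by
          rw [← hst]
          exact List.mem_append.mpr (Or.inl
            (List.mem_append.mpr (Or.inr (List.getElem_mem hkv))))
        rw [hw] at hvm
        rcases mem_w hvm with hsf | hn
        · exfalso
          have := hc k (by simp only [List.length_append]; omega) false
            (by rw [List.getD_eq_getElem _ _ hkv, hsf])
          rw [htrue] at this; exact Bool.true_eq_false.mp this
        · exact hn
      have hwk : w.getD (s.length + k) none = none := by
        rw [← hst, List.append_assoc,
            List.getD_append_right _ _ _ _ (Nat.le_add_right _ _),
            Nat.add_sub_cancel_left,
            List.getD_append _ _ _ _ hkv]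
        exact hvk
      have hlt : s.length + k < m + 1 + n := by
        have := congrArg List.length hst
        simp only [List.length_append] at this
        omega
      exact hole_pos hlt hwk
    -- hence x is all false
    have hxfalse : ∀ b ∈ x, b = false := by
      intro b hb
      by_contra hbt
      have hbt : b = true := by cases b <;> simp_all
      obtain ⟨i, hi, hxi⟩ := List.getElem_of_mem hb
      have h1 : (x ++ x).getD i false = true := by
        rw [List.getD_append _ _ _ _ hi, List.getD_eq_getElem _ _ hi, hxi, hbt]
      have h2 : (x ++ x).getD (x.length + i) false = true := by
        rw [List.getD_append_right _ _ _ _ (Nat.le_add_right _ _),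
            Nat.add_sub_cancel_left, List.getD_eq_getElem _ _ hi, hxi, hbt]
      have k1 := key i (by omega) h1
      have k2 := key (x.length + i) (by omega) h2
      omega
    have hxrep : x = List.replicate x.length false :=
      List.eq_replicate_iff.mpr ⟨rfl, hxfalse⟩
    refine ⟨x.length, hxpos, ?_, ?_⟩
    · have : v.length ≤ w.length := List.IsInfix.length_le ⟨s, t, hst⟩
      omega
    · rw [List.eq_replicate_iff]
      exact ⟨by simp [two_mul], fun b hb =>
        hxfalse b ((List.mem_append.mp hb).elim id id)⟩
  · rintro ⟨j, hj, hjle, rfl⟩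
    refine ⟨List.replicate j false, by simp; omega, ?_, w.take (2 * j),
      (List.take_prefix _ _).isInfix, ?_, ?_⟩
    · rw [← List.replicate_add, two_mul]
    · simp only [List.length_replicate, List.length_take, hwlen]
      omega
    · intro i hi b hb
      simp only [List.length_replicate] at hi
      have hiv : i < (w.take (2 * j)).length := by
        simp only [List.length_take, hwlen]; omega
      rw [List.getD_eq_getElem _ _ hiv] at hb
      rcases mem_w (a := (w.take (2 * j))[i])
        ((List.take_subset _ _) (List.getElem_mem hiv)) with hsf | hn
      · rw [hb] at hsf
        rw [List.getD_eq_getElem _ _ (by simpa using hi)]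
        simp only [List.getElem_replicate]
        exact (Option.some_injective _ hsf).symm
      · rw [hb] at hn; exact absurd hn (by simp)

/-- The partial word `0^m ⋄ 0^n` contains exactly `⌊(m+n+1)/2⌋` distinct squares. -/
theorem stmt1 (m n : ℕ) :
    (SqSet (List.replicate m (some false) ++ [none] ++
      List.replicate n (some false))).ncard = (m + n + 1) / 2 := by
  have hset : SqSet (List.replicate m (some false) ++ [none] ++
      List.replicate n (some false)) =
      (fun j => List.replicate (2 * j) false) '' ↑(Finset.Icc 1 ((m + n + 1) / 2)) := by
    ext u
    rw [sq_mem_iff]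
    simp only [Finset.coe_Icc, Set.mem_image, Set.mem_Icc]
    constructor
    · rintro ⟨j, h1, h2, rfl⟩
      exact ⟨j, ⟨h1, (Nat.le_div_iff_mul_le (by norm_num)).mpr (by omega)⟩, rfl⟩
    · rintro ⟨j, ⟨h1, h2⟩, rfl⟩
      refine ⟨j, h1, ?_, rfl⟩
      have := (Nat.le_div_iff_mul_le (k := 2) (by norm_num)).mp h2
      omega
  rw [hset, Set.ncard_image_of_injective _ (fun i j h => by
    have := congrArg List.length h
    simp only [List.length_replicate] at this
    omega), Set.ncard_coe_finset, Nat.card_Icc]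
  omega
end

section
/- Any binary partial word with exactly one hole that contains no antisquare is, up to complementation, of the form 0^m ⋄ 0^n or 0^m ⋄ 1^n. -/
lemma exists_map_some (s : List (Option Bool)) (h : none ∉ s) :
    ∃ s' : List Bool, s = s'.map some := by
  induction s with
  | nil => exact ⟨[], rfl⟩
  | cons a t ih =>
    obtain ⟨t', ht⟩ := ih (fun hm => h (List.mem_cons_of_mem _ hm))
    cases a with
    | none => exact absurd List.mem_cons_self h
    | some b => exact ⟨b :: t', by simp [ht]⟩

lemma flip_of_not_chain (l : List Bool) (h : ¬ l.Chain' (· = ·)) :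
    ∃ x y : Bool, x ≠ y ∧ [x, y] <:+: l := by
  induction l with
  | nil => exact absurd List.isChain_nil h
  | cons a t ih =>
    cases t with
    | nil => exact absurd (List.isChain_singleton _) h
    | cons b u =>
      rw [List.Chain', List.isChain_cons_cons] at h
      push_neg at h
      by_cases hab : a = b
      · obtain ⟨x, y, hxy, hinf⟩ := ih (h hab)
        exact ⟨x, y, hxy, hinf.trans (List.infix_cons (List.infix_refl _))⟩
      · exact ⟨a, b, hab, ⟨[], u, rfl⟩⟩

lemma repl_of_chain (l : List Bool) (h : l.Chain' (· = ·)) :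
    ∃ c, l = List.replicate l.length c := by
  induction l with
  | nil => exact ⟨false, rfl⟩
  | cons a t ih =>
    cases t with
    | nil => exact ⟨a, rfl⟩
    | cons b u =>
      rw [List.Chain', List.isChain_cons_cons] at h
      obtain ⟨c, hc⟩ := ih h.2
      have hb : b = c := by
        have := congrArg (fun l => l.headD false) hc
        simpa [List.replicate_succ] using this
      subst hb
      obtain rfl := h.1
      have hu : u = List.replicate u.length a := by
        simpa [List.replicate_succ] using hc
      exact ⟨a, by rw [List.length_cons, List.length_cons,
        List.replicate_succ, List.replicate_succ, ← hu]⟩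

lemma chain_of_no_anti (w : List (Option Bool)) (h2 : AntiSet w = ∅)
    (l : List Bool) (hinf : l.map some <:+: w) : l.Chain' (· = ·) := by
  by_contra h
  obtain ⟨x, y, hxy, hxyinf⟩ := flip_of_not_chain l h
  have hmem : [x, y] ∈ AntiSet w := by
    refine ⟨⟨by simp, by simp, ?_⟩, ?_⟩
    · intro i hi
      simp only [List.length_cons, List.length_nil] at hi
      have : i = 0 := by omega
      subst this
      simpa using hxy
    · exact (hxyinf.map some).trans hinf
  rw [h2] at hmem
  exact hmem

/-- A one-hole binary partial word with no antisquare is, up to complementation,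
of the form `0^m ⋄ 0^n` or `0^m ⋄ 1^n`. -/
theorem stmt3 (w : List (Option Bool)) (h1 : OneHole w) (h2 : AntiSet w = ∅) :
    ∃ m n : ℕ,
      w = List.replicate m (some false) ++ [none] ++ List.replicate n (some false) ∨
      w = List.replicate m (some false) ++ [none] ++ List.replicate n (some true) ∨
      w.map (Option.map not) =
        List.replicate m (some false) ++ [none] ++ List.replicate n (some false) ∨
      w.map (Option.map not) =
        List.replicate m (some false) ++ [none] ++ List.replicate n (some true) := by
  have hmem : none ∈ w := by
    rw [← List.count_pos_iff, h1]; norm_num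
  obtain ⟨s, t, hw⟩ := List.append_of_mem hmem
  have hcnt : s.count none + (t.count none + 1) = 1 := by
    have := h1
    rw [OneHole, hw, List.count_append, List.count_cons] at this
    simpa using this
  have hs0 : none ∉ s := by
    rw [← List.count_eq_zero (a := none)]; omega
  have ht0 : none ∉ t := by
    rw [← List.count_eq_zero (a := none)]; omega
  obtain ⟨s', rfl⟩ := exists_map_some s hs0
  obtain ⟨t', rfl⟩ := exists_map_some t ht0
  have hsinf : s'.map some <:+: w := ⟨[], none :: t'.map some, by simp [hw]⟩
  have htinf : t'.map some <:+: w := ⟨s'.map some ++ [none], [], by simp [hw]⟩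
  obtain ⟨c1, hc1⟩ := repl_of_chain s' (chain_of_no_anti w h2 s' hsinf)
  obtain ⟨c2, hc2⟩ := repl_of_chain t' (chain_of_no_anti w h2 t' htinf)
  obtain ⟨m, hm⟩ : ∃ m, s' = List.replicate m c1 := ⟨s'.length, hc1⟩
  obtain ⟨n, hn⟩ : ∃ n, t' = List.replicate n c2 := ⟨t'.length, hc2⟩
  clear hc1 hc2 hsinf htinf
  subst hm hn hw
  refine ⟨m, n, ?_⟩
  cases c1 <;> cases c2
  · exact Or.inl (by simp [List.map_replicate])
  · exact Or.inr (Or.inl (by simp [List.map_replicate]))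
  · exact Or.inr (Or.inr (Or.inr (by simp [List.map_replicate])))
  · exact Or.inr (Or.inr (Or.inl (by simp [List.map_replicate])))
end

section
/- The longest binary partial word with exactly one hole containing at most a distinct squares and no antisquares has length exactly 2a+1. -/
open List

lemma sqset_finite (w : List (Option Bool)) : (SqSet w).Finite := by
  apply (List.finite_length_le Bool w.length).subset
  rintro u ⟨x, hx, rfl, v, hv, hlen, _⟩
  simpa [Set.mem_setOf_eq, hlen] using hv.length_le

lemma sqset_mono {v w : List (Option Bool)} (h : v <:+: w) : SqSet v ⊆ SqSet w := by
  rintro u ⟨x, hx, rfl, v', hv', hc⟩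
  exact ⟨x, hx, rfl, v', hv'.trans h, hc⟩

lemma mem_sqset_const {w : List (Option Bool)} {b : Bool}
    (hw : ∀ o ∈ w, o = some b ∨ o = none) {n : ℕ} (hn : 1 ≤ n) (h2 : 2 * n ≤ w.length) :
    List.replicate (2 * n) b ∈ SqSet w := by
  refine ⟨List.replicate n b, by simp; omega, by rw [← List.replicate_add]; ring_nf,
    w.take (2 * n), (List.take_prefix _ _).isInfix, by simp [h2], ?_⟩
  intro i hi c hc
  simp only [List.length_replicate] at hi
  have hiv : i < (w.take (2 * n)).length := by simp; omega
  rw [List.getD_eq_getElem _ _ hiv] at hc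
  have hmem : (w.take (2 * n))[i] ∈ w := (List.take_sublist _ _).subset (List.getElem_mem _)
  rcases hw _ hmem with h | h
  · rw [List.getD_eq_getElem _ _ (by simpa using hi), List.getElem_replicate]
    rw [h] at hc; exact Option.some_injective _ hc
  · rw [h] at hc; exact absurd hc (by simp)

lemma count_le_of_compat {b : Bool} : ∀ (u : List Bool) (v : List (Option Bool)),
    u.length = v.length → (∀ o ∈ v, o = some b ∨ o = none) →
    (∀ i, i < u.length → ∀ c : Bool, v.getD i none = some c → u.getD i false = c) →
    u.count (!b) ≤ v.count none
  | [], _, _, _, _ => by simp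
  | a :: u, [], hl, _, _ => by simp at hl
  | a :: u, o :: v, hl, hv, hc => by
    have htail := count_le_of_compat u v (by simpa using hl)
      (fun o ho => hv o (List.mem_cons_of_mem _ ho))
      (fun i hi c h => hc (i + 1) (by simpa using Nat.succ_lt_succ hi) c h)
    rcases hv o (List.mem_cons_self) with rfl | rfl
    · have ha : a = b := hc 0 (by simp) b rfl
      subst ha
      simpa [List.count_cons] using htail
    · have h1 : (a :: u).count (!b) ≤ u.count (!b) + 1 := by
        simp only [List.count_cons]; split <;> omega
      have h2 : ((none : Option Bool) :: v).count none = v.count none + 1 := by simp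
      omega

lemma anti_pair {x y : Bool} (h : x ≠ y) : IsAntisquare [x, y] := by
  refine ⟨by simp, by simp, ?_⟩
  intro i hi
  simp only [List.length_cons, List.length_nil] at hi ⊢
  interval_cases i
  simpa using h

lemma eq_replicate_of_pairs : ∀ (q : List Bool), (∀ x y : Bool, [x, y] <:+: q → x = y) →
    ∃ b, q = List.replicate q.length b
  | [], _ => ⟨true, rfl⟩
  | [x], _ => ⟨x, rfl⟩
  | x :: y :: t, h => by
    obtain ⟨b, hb⟩ := eq_replicate_of_pairs (y :: t)
      (fun a c ⟨s, u, hs⟩ => h a c ⟨x :: s, u, by rw [← hs]; rfl⟩)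
    have hx : x = y := h x y ⟨[], t, rfl⟩
    simp only [List.length_cons, List.replicate_succ] at hb ⊢
    obtain ⟨hy, ht⟩ := List.cons_eq_cons.mp hb
    exact ⟨b, by rw [hx, hy, ← ht]⟩

lemma exists_map_some_s4 : ∀ (p : List (Option Bool)), none ∉ p → ∃ q : List Bool, p = q.map some
  | [], _ => ⟨[], rfl⟩
  | o :: p, h => by
    obtain ⟨q, hq⟩ := exists_map_some_s4 p (fun hp => h (List.mem_cons_of_mem _ hp))
    cases o with
    | none => exact absurd (List.mem_cons_self) h
    | some x => exact ⟨x :: q, by simp [hq]⟩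

lemma onehole_split {w : List (Option Bool)} (h : OneHole w) :
    ∃ p s, w = p ++ none :: s ∧ none ∉ p ∧ none ∉ s := by
  have hm : (none : Option Bool) ∈ w := by
    have : 0 < w.count none := by rw [h]; omega
    exact List.count_pos_iff.mp this
  obtain ⟨p, s, rfl⟩ := List.append_of_mem hm
  have hc : p.count none + (s.count none + 1) = 1 := by
    simpa [OneHole, List.count_append, List.count_cons] using h
  refine ⟨p, s, rfl, ?_, ?_⟩ <;> intro hmem <;>
    have := List.count_pos_iff.mpr hmem <;> omega

lemma existence (a : ℕ) : ∃ w : List (Option Bool), OneHole w ∧ (SqSet w).ncard ≤ a ∧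
    AntiSet w = ∅ ∧ w.length = 2*a + 1 := by
  set w := (List.replicate a (some true) ++ none :: List.replicate a (some true) :
    List (Option Bool)) with hw
  have helem : ∀ o ∈ w, o = some true ∨ o = none := by
    intro o ho
    rw [hw] at ho
    simp only [List.mem_append, List.mem_cons, List.mem_replicate] at ho
    rcases ho with ⟨-, rfl⟩ | rfl | ⟨-, rfl⟩ <;> simp
  have hcount : w.count none = 1 := by
    simp [hw, List.count_append, List.count_cons, List.count_replicate]
  refine ⟨w, hcount, ?_, ?_, by
    simp only [hw, List.length_append, List.length_cons, List.length_replicate]; omega⟩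
  · have hsub : SqSet w ⊆ (fun n => List.replicate (2*n) true) '' ↑(Finset.Icc 1 a) := by
      rintro u ⟨x, hx, rfl, v, hv, hlen, hcomp⟩
      have hvel : ∀ o ∈ v, o = some true ∨ o = none := fun o ho => helem o (hv.sublist.subset ho)
      have hcnt : (x ++ x).count false ≤ v.count none := by
        simpa using count_le_of_compat (b := true) (x ++ x) v hlen hvel hcomp
      have hvw : v.count none ≤ 1 := hcount ▸ hv.count_le none
      rw [List.count_append] at hcnt
      have hxf : x.count false = 0 := by omega
      have hxr : x = List.replicate x.length true := by
        rw [List.eq_replicate_iff]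
        refine ⟨rfl, fun c hc => ?_⟩
        cases c
        · exact absurd (List.count_pos_iff.mpr hc) (by omega)
        · rfl
      have hlen2 : x.length + x.length ≤ 2 * a + 1 := by
        have h := hlen ▸ hv.length_le
        simp only [List.length_append, hw, List.length_cons, List.length_replicate] at h
        omega
      refine ⟨x.length, ?_, ?_⟩
      · simp only [Finset.coe_Icc, Set.mem_Icc]
        exact ⟨List.length_pos_iff.mpr hx, by omega⟩
      · show List.replicate (2 * x.length) true = x ++ x
        rw [two_mul, List.replicate_add, ← hxr]
    calc (SqSet w).ncard ≤ _ := Set.ncard_le_ncard hsub ((Finset.Icc 1 a).finite_toSet.image _)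
      _ ≤ ((Finset.Icc 1 a : Finset ℕ) : Set ℕ).ncard :=
        Set.ncard_image_le (Finset.Icc 1 a).finite_toSet
      _ ≤ a := by rw [Set.ncard_coe_finset, Nat.card_Icc]; omega
  · rw [Set.eq_empty_iff_forall_notMem]
    rintro u ⟨⟨hne, hev, hcond⟩, hinf⟩
    have hall : ∀ x ∈ u, x = true := by
      intro x hx
      have hm : some x ∈ w := hinf.sublist.subset (List.mem_map_of_mem (f := some) hx)
      rcases helem _ hm with h | h
      · exact Option.some_injective _ h
      · simp at h
    have hlp : 0 < u.length := List.length_pos_iff.mpr hne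
    have h2 : 2 ≤ u.length := by omega
    exact hcond 0 (by omega) (by
      rw [List.getD_eq_getElem _ _ (by omega), List.getD_eq_getElem _ _ (by omega)]
      rw [hall _ (List.getElem_mem _), hall _ (List.getElem_mem _)])

lemma ncard_ge_image {w : List (Option Bool)} (b : Bool) (M : ℕ)
    (h : ∀ n ∈ Finset.Icc 1 M, List.replicate (2*n) b ∈ SqSet w) :
    M ≤ (SqSet w).ncard := by
  have hsub : (fun n => List.replicate (2*n) b) '' ↑(Finset.Icc 1 M) ⊆ SqSet w := by
    rintro u ⟨n, hn, rfl⟩; exact h n (by simpa using hn)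
  have hinj : Set.InjOn (fun n => List.replicate (2*n) b) ↑(Finset.Icc 1 M) := by
    intro m _ n _ hmn
    have := congrArg List.length hmn
    simp only [List.length_replicate] at this
    omega
  calc M = ((Finset.Icc 1 M : Finset ℕ) : Set ℕ).ncard := by
        rw [Set.ncard_coe_finset, Nat.card_Icc]; omega
    _ = _ := (Set.ncard_image_of_injOn hinj).symm
    _ ≤ (SqSet w).ncard := Set.ncard_le_ncard hsub (sqset_finite w)

lemma upper (a : ℕ) (w : List (Option Bool)) (h1 : OneHole w) (h2 : (SqSet w).ncard ≤ a)
    (h3 : AntiSet w = ∅) : w.length ≤ 2*a + 1 := by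
  obtain ⟨p, s, rfl, hp, hs⟩ := onehole_split h1
  obtain ⟨q, rfl⟩ := exists_map_some_s4 p hp
  obtain ⟨r, rfl⟩ := exists_map_some_s4 s hs
  have hqpairs : ∀ x y : Bool, [x, y] <:+: q → x = y := by
    intro x y hxy
    by_contra hne
    have hmem : [x, y] ∈ AntiSet (q.map some ++ none :: r.map some) :=
      ⟨anti_pair hne, (hxy.map some).trans (List.prefix_append _ _).isInfix⟩
    rw [h3] at hmem; exact hmem
  have hrpairs : ∀ x y : Bool, [x, y] <:+: r → x = y := by
    intro x y hxy
    by_contra hne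
    have hinf : ([x, y].map some) <:+: q.map some ++ none :: r.map some :=
      ((hxy.map some).trans (List.suffix_cons _ _).isInfix).trans
        (List.suffix_append _ _).isInfix
    have hmem : [x, y] ∈ AntiSet (q.map some ++ none :: r.map some) := ⟨anti_pair hne, hinf⟩
    rw [h3] at hmem; exact hmem
  obtain ⟨b, hb⟩ := eq_replicate_of_pairs q hqpairs
  obtain ⟨c, hc⟩ := eq_replicate_of_pairs r hrpairs
  set i := q.length with hi
  set j := r.length with hj
  have hqm : q.map some = List.replicate i (some b) := by rw [hb, List.map_replicate]
  have hrm : r.map some = List.replicate j (some c) := by rw [hc, List.map_replicate]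
  have hwlen : (q.map some ++ none :: r.map some).length = i + j + 1 := by
    simp only [List.length_append, List.length_cons, List.length_map]; omega
  rw [hwlen]
  by_cases hbc : b = c
  · subst hbc
    have helem : ∀ o ∈ q.map some ++ none :: r.map some, o = some b ∨ o = none := by
      intro o ho
      simp only [List.mem_append, List.mem_cons] at ho
      rcases ho with ho | rfl | ho
      · rw [hqm] at ho; exact Or.inl (List.eq_of_mem_replicate ho)
      · exact Or.inr rfl
      · rw [hrm] at ho; exact Or.inl (List.eq_of_mem_replicate ho)
    have hM : (i + j + 1) / 2 ≤ (SqSet (q.map some ++ none :: r.map some)).ncard := by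
      apply ncard_ge_image b
      intro n hn
      simp only [Finset.mem_Icc] at hn
      exact mem_sqset_const helem hn.1 (by rw [hwlen]; omega)
    omega
  · set P := (List.replicate i (some b) ++ [none] : List (Option Bool)) with hP
    set S := (none :: List.replicate j (some c) : List (Option Bool)) with hS
    have hPinf : P <:+: q.map some ++ none :: r.map some :=
      ⟨[], r.map some, by rw [hP, List.nil_append, List.append_assoc, List.singleton_append, hqm]⟩
    have hSinf : S <:+: q.map some ++ none :: r.map some :=
      ⟨q.map some, [], by rw [hS, List.append_nil, hrm]⟩
    have hPelem : ∀ o ∈ P, o = some b ∨ o = none := by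
      intro o ho
      simp only [hP, List.mem_append, List.mem_cons, List.not_mem_nil, or_false] at ho
      rcases ho with ho | rfl
      · exact Or.inl (List.eq_of_mem_replicate ho)
      · exact Or.inr rfl
    have hSelem : ∀ o ∈ S, o = some c ∨ o = none := by
      intro o ho
      simp only [hS, List.mem_cons] at ho
      rcases ho with rfl | ho
      · exact Or.inr rfl
      · exact Or.inl (List.eq_of_mem_replicate ho)
    have hPlen : P.length = i + 1 := by simp [hP]
    have hSlen : S.length = j + 1 := by simp [hS]
    set Mb := (i + 1) / 2 with hMb
    set Mc := (j + 1) / 2 with hMc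
    set Tb := (fun n => List.replicate (2*n) b) '' ↑(Finset.Icc 1 Mb) with hTb
    set Tc := (fun n => List.replicate (2*n) c) '' ↑(Finset.Icc 1 Mc) with hTc
    have hTbsub : Tb ⊆ SqSet (q.map some ++ none :: r.map some) := by
      rintro u ⟨n, hn, rfl⟩
      simp only [Finset.coe_Icc, Set.mem_Icc] at hn
      exact sqset_mono hPinf (mem_sqset_const hPelem hn.1 (by rw [hPlen]; omega))
    have hTcsub : Tc ⊆ SqSet (q.map some ++ none :: r.map some) := by
      rintro u ⟨n, hn, rfl⟩
      simp only [Finset.coe_Icc, Set.mem_Icc] at hn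
      exact sqset_mono hSinf (mem_sqset_const hSelem hn.1 (by rw [hSlen]; omega))
    have hdisj : Disjoint Tb Tc := by
      rw [Set.disjoint_left]
      rintro u ⟨n, hn, rfl⟩ ⟨m, hm, hmu⟩
      simp only [Finset.coe_Icc, Set.mem_Icc] at hn hm
      apply hbc
      have hmu' : List.replicate (2*m) c = List.replicate (2*n) b := hmu
      have hbmem : b ∈ List.replicate (2*m) c := by
        rw [hmu']; exact List.mem_replicate.mpr ⟨by omega, rfl⟩
      exact List.eq_of_mem_replicate hbmem
    have hinjb : Set.InjOn (fun n => List.replicate (2*n) b) ↑(Finset.Icc 1 Mb) := by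
      intro m _ n _ hmn
      have := congrArg List.length hmn
      simp only [List.length_replicate] at this
      omega
    have hinjc : Set.InjOn (fun n => List.replicate (2*n) c) ↑(Finset.Icc 1 Mc) := by
      intro m _ n _ hmn
      have := congrArg List.length hmn
      simp only [List.length_replicate] at this
      omega
    have hcard : (Tb ∪ Tc).ncard = Mb + Mc := by
      rw [Set.ncard_union_eq hdisj ((Finset.Icc 1 Mb).finite_toSet.image _)
        ((Finset.Icc 1 Mc).finite_toSet.image _), hTb, hTc,
        Set.ncard_image_of_injOn hinjb, Set.ncard_image_of_injOn hinjc,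
        Set.ncard_coe_finset, Set.ncard_coe_finset, Nat.card_Icc, Nat.card_Icc]
      omega
    have hle : Mb + Mc ≤ a := by
      rw [← hcard]
      exact le_trans (Set.ncard_le_ncard (Set.union_subset hTbsub hTcsub)
        (sqset_finite _)) h2
    omega


/-- The longest one-hole binary partial word with at most `a` distinct squares and
no antisquares has length exactly `2a+1`. -/
theorem stmt4 (a : ℕ) :
    (∃ w : List (Option Bool), OneHole w ∧ (SqSet w).ncard ≤ a ∧ AntiSet w = ∅ ∧
      w.length = 2*a + 1) ∧
    (∀ w : List (Option Bool), OneHole w → (SqSet w).ncard ≤ a → AntiSet w = ∅ →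
      w.length ≤ 2*a + 1) :=
  ⟨existence a, fun w h1 h2 h3 => upper a w h1 h2 h3⟩
end

section
/- Let vtm be the fixed point starting with 0 of the morphism 0↦012, 1↦02, 2↦1 on {0,1,2}. Let h be the morphism to partial words over {0,1,⋄} given by h(0)=1100, h(1)=011⋄, h(2)=1010. Then the infinite partial word h(vtm) contains no square of order ≥ 4: there do not exist j ≥ 0 and n ≥ 4 such that for all i < n, h(vtm)[j+i] = h(vtm)[j+n+i] or h(vtm)[j+i] = ⋄ or h(vtm)[j+n+i] = ⋄. -/
/-- The morphism 0 ↦ 012, 1 ↦ 02, 2 ↦ 1 applied to a word. -/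
def vtmIter (l : List ℕ) : List ℕ :=
  l.flatMap (fun c => if c = 0 then [0, 1, 2] else if c = 1 then [0, 2] else [1])

/-- The ternary Thue–Morse word: fixed point starting with 0 of the above morphism. -/
def vtm (n : ℕ) : ℕ := (vtmIter^[n+1] [0]).getD n 0

/-- The morphism h(0)=1100, h(1)=011⋄, h(2)=1010, with the hole ⋄ encoded as 2. -/
def hImg : ℕ → List ℕ
  | 0 => [1, 1, 0, 0]
  | 1 => [0, 1, 1, 2]
  | _ => [1, 0, 1, 0]

/-- The infinite partial word h(vtm), over {0,1} with hole encoded as 2. -/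
def hvtm (n : ℕ) : ℕ := (hImg (vtm (n / 4))).getD (n % 4) 0

def tmw (n : ℕ) : ℕ := (Nat.digits 2 n).sum % 2
lemma tmw_le (n : ℕ) : tmw n ≤ 1 := by unfold tmw; omega
lemma tmw_zero : tmw 0 = 0 := by simp [tmw]
lemma tmw_rec (n : ℕ) (hn : n ≠ 0) : tmw n = (n % 2 + tmw (n / 2)) % 2 := by
  unfold tmw
  rw [Nat.digits_def' (by norm_num : 1 < 2) (Nat.pos_of_ne_zero hn), List.sum_cons]
  omega
lemma tmw_even (n : ℕ) : tmw (2 * n) = tmw n := by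
  rcases Nat.eq_zero_or_pos n with h | h
  · simp [h]
  · rw [tmw_rec (2 * n) (by omega), show 2 * n % 2 = 0 by omega, show 2 * n / 2 = n by omega]
    have := tmw_le n; omega
lemma tmw_odd (n : ℕ) : tmw (2 * n + 1) = (tmw n + 1) % 2 := by
  rw [tmw_rec (2 * n + 1) (by omega), show (2 * n + 1) % 2 = 1 by omega,
    show (2 * n + 1) / 2 = n by omega]
  omega
lemma tmw_one : tmw 1 = 1 := by
  have := tmw_odd 0; rw [tmw_zero] at this; simpa using this

/-- The formula for vtm. -/
def Fv (n : ℕ) : ℕ := 1 + tmw n - tmw (n + 1)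

lemma Fv_even (N : ℕ) : Fv (2 * N) = 2 * tmw N := by
  unfold Fv
  rw [show 2 * N + 1 = 2 * N + 1 from rfl, tmw_even, tmw_odd]
  have := tmw_le N; omega

lemma Fv_odd (N : ℕ) : Fv (2 * N + 1) = 2 - tmw N - tmw (N + 1) := by
  unfold Fv
  rw [show 2 * N + 1 + 1 = 2 * (N + 1) by ring, tmw_odd, tmw_even]
  have := tmw_le N; have := tmw_le (N + 1); omega

lemma vtmIter_single (c : ℕ) :
    vtmIter [c] = if c = 0 then [0, 1, 2] else if c = 1 then [0, 2] else [1] := by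
  simp [vtmIter]

lemma mapF (N : ℕ) : vtmIter ((List.range N).map Fv) = (List.range (2 * N + tmw N)).map Fv := by
  induction N with
  | zero => simp [vtmIter, tmw]
  | succ N ih =>
    rw [List.range_succ, List.map_append, show List.map Fv [N] = [Fv N] by simp]
    have hsplit : vtmIter (List.map Fv (List.range N) ++ [Fv N]) =
        vtmIter (List.map Fv (List.range N)) ++ vtmIter [Fv N] := by
      simp [vtmIter]
    rw [hsplit, ih]
    have hN := tmw_le N
    have hN1 := tmw_le (N + 1)
    have h0 : tmw N = 0 ∨ tmw N = 1 := by omega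
    have h1 : tmw (N + 1) = 0 ∨ tmw (N + 1) = 1 := by omega
    rcases h0 with h0 | h0 <;> rcases h1 with h1 | h1
    · -- tmw N = 0, tmw (N+1) = 0 : Fv N = 1, block [0,2]
      have eN : Fv N = 1 := by unfold Fv; omega
      rw [h0, h1, eN]
      conv_rhs => rw [show 2 * (N + 1) + 0 = (2 * N + 0) + 2 by ring, List.range_add, List.map_append]
      congr 1
      rw [show List.range 2 = [0, 1] from rfl]
      simp only [List.map_cons, List.map_nil, Nat.add_zero]
      have e0 : Fv (2 * N) = 0 := by rw [Fv_even, h0]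
      have e1 : Fv (2 * N + 1) = 2 := by rw [Fv_odd, h0, h1]
      rw [e0, e1, vtmIter_single]
      rfl
    · -- tmw N = 0, tmw (N+1) = 1 : Fv N = 0, block [0,1,2]
      have eN : Fv N = 0 := by unfold Fv; omega
      rw [h0, h1, eN]
      conv_rhs => rw [show 2 * (N + 1) + 1 = (2 * N + 0) + 3 by ring, List.range_add, List.map_append]
      congr 1
      rw [show List.range 3 = [0, 1, 2] from rfl]
      simp only [List.map_cons, List.map_nil, Nat.add_zero]
      have e0 : Fv (2 * N) = 0 := by rw [Fv_even, h0]
      have e1 : Fv (2 * N + 1) = 1 := by rw [Fv_odd, h0, h1]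
      have e2 : Fv (2 * N + 2) = 2 := by
        rw [show 2 * N + 2 = 2 * (N + 1) by ring, Fv_even, h1]
      rw [e0, e1, e2, vtmIter_single]
      rfl
    · -- tmw N = 1, tmw (N+1) = 0 : Fv N = 2, block [1]
      have eN : Fv N = 2 := by unfold Fv; omega
      rw [h0, h1, eN]
      conv_rhs => rw [show 2 * (N + 1) + 0 = (2 * N + 1) + 1 by ring, List.range_add, List.map_append]
      congr 1
      rw [show List.range 1 = [0] from rfl]
      simp only [List.map_cons, List.map_nil, Nat.add_zero]
      have e1 : Fv (2 * N + 1) = 1 := by rw [Fv_odd, h0, h1]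
      rw [e1, vtmIter_single]
      rfl
    · -- tmw N = 1, tmw (N+1) = 1 : Fv N = 1, block [0,2]
      have eN : Fv N = 1 := by unfold Fv; omega
      rw [h0, h1, eN]
      conv_rhs => rw [show 2 * (N + 1) + 1 = (2 * N + 1) + 2 by ring, List.range_add, List.map_append]
      congr 1
      rw [show List.range 2 = [0, 1] from rfl]
      simp only [List.map_cons, List.map_nil, Nat.add_zero]
      have e1 : Fv (2 * N + 1) = 0 := by rw [Fv_odd, h0, h1]
      have e2 : Fv (2 * N + 1 + 1) = 2 := by
        rw [show 2 * N + 1 + 1 = 2 * (N + 1) by ring, Fv_even, h1]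
      rw [e1, e2, vtmIter_single]
      rfl

def lenk : ℕ → ℕ
  | 0 => 1
  | k + 1 => 2 * lenk k + tmw (lenk k)

lemma iter_eq (k : ℕ) : vtmIter^[k] [0] = (List.range (lenk k)).map Fv := by
  induction k with
  | zero =>
    have : Fv 0 = 0 := by unfold Fv; rw [tmw_zero, show (0:ℕ)+1 = 1 from rfl, tmw_one]
    simp [lenk, List.range_succ, this]
  | succ k ih =>
    rw [Function.iterate_succ_apply', ih, mapF, lenk]

lemma lenk_gt (k : ℕ) : k < lenk k := by
  induction k with
  | zero => simp [lenk]
  | succ k ih => have := tmw_le (lenk k); simp [lenk]; omega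

lemma vtm_eq (n : ℕ) : vtm n = 1 + tmw n - tmw (n + 1) := by
  unfold vtm
  rw [iter_eq]
  have h : n < lenk (n + 1) := by have := lenk_gt (n + 1); omega
  rw [List.getD_eq_getElem _ _ (by simpa using h)]
  simp [Fv]

lemma vtm_le (n : ℕ) : vtm n ≤ 2 := by
  rw [vtm_eq]; have := tmw_le n; have := tmw_le (n + 1); omega

lemma tmw_no3 (k : ℕ) : ¬ (tmw k = tmw (k + 1) ∧ tmw (k + 1) = tmw (k + 2)) := by
  rcases Nat.even_or_odd k with ⟨x, hx⟩ | ⟨x, hx⟩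
  · have h1 : tmw k = tmw x := by rw [show k = 2 * x by omega, tmw_even]
    have h2 : tmw (k + 1) = (tmw x + 1) % 2 := by rw [show k + 1 = 2 * x + 1 by omega, tmw_odd]
    have := tmw_le x; omega
  · have h1 : tmw (k + 1) = tmw (x + 1) := by rw [show k + 1 = 2 * (x + 1) by omega, tmw_even]
    have h2 : tmw (k + 2) = (tmw (x + 1) + 1) % 2 := by
      rw [show k + 2 = 2 * (x + 1) + 1 by omega, tmw_odd]
    have := tmw_le (x + 1); omega

lemma vtm_ne_succ (k : ℕ) : vtm k ≠ vtm (k + 1) := by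
  have h1 := vtm_eq k
  have h2 := vtm_eq (k + 1)
  have h3 := tmw_no3 k
  have := tmw_le k; have := tmw_le (k + 1); have := tmw_le (k + 2)
  intro h
  rw [h1, h2] at h
  rw [show k + 1 + 1 = k + 2 by omega] at h
  omega
theorem tmw_of : ∀ m, 0 < m → ∀ j, (∀ i, i ≤ m → tmw (j + i) = tmw (j + m + i)) → False := by
  intro m
  induction m using Nat.strong_induction_on with
  | _ m IH =>
  intro hm j H
  rcases Nat.even_or_odd m with ⟨m', hm'⟩ | ⟨m', hm'⟩
  · -- m = m' + m' even
    have hm1 : 0 < m' := by omega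
    apply IH m' (by omega) hm1 (j / 2)
    intro q hq
    by_cases hjq : j ≤ 2 * (j / 2 + q)
    · have h := H (2 * (j / 2 + q) - j) (by omega)
      rw [show j + (2 * (j / 2 + q) - j) = 2 * (j / 2 + q) by omega,
        show j + m + (2 * (j / 2 + q) - j) = 2 * (j / 2 + q + m') by omega,
        tmw_even, tmw_even] at h
      rw [show j / 2 + m' + q = j / 2 + q + m' by omega]
      exact h
    · have hj : j = 2 * (j / 2) + 1 := by omega
      have hq0 : q = 0 := by omega
      have h := H 0 (by omega)
      rw [show j + 0 = 2 * (j / 2) + 1 by omega,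
        show j + m + 0 = 2 * (j / 2 + m') + 1 by omega, tmw_odd, tmw_odd] at h
      have t1 := tmw_le (j / 2)
      have t2 := tmw_le (j / 2 + m')
      subst hq0
      rw [show j / 2 + 0 = j / 2 by omega, show j / 2 + m' + 0 = j / 2 + m' by omega]
      omega
  · -- m = 2 * m' + 1 odd
    by_cases hA : ∃ k, j ≤ k ∧ k + 1 ≤ j + m ∧ tmw k = tmw (k + 1)
    · obtain ⟨k, hk1, hk2, hk3⟩ := hA
      rcases Nat.even_or_odd k with ⟨x, hx⟩ | ⟨x, hx⟩
      · rw [show k = 2 * x by omega, show 2 * x + 1 = 2 * x + 1 from rfl, tmw_even, tmw_odd] at hk3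
        have := tmw_le x; omega
      · have e1 := H (k - j) (by omega)
        have e2 := H (k + 1 - j) (by omega)
        rw [show j + (k - j) = k by omega,
          show j + m + (k - j) = 2 * (x + m' + 1) by omega, tmw_even] at e1
        rw [show j + (k + 1 - j) = k + 1 by omega,
          show j + m + (k + 1 - j) = 2 * (x + m' + 1) + 1 by omega, tmw_odd] at e2
        have := tmw_le (x + m' + 1); have := tmw_le k; have := tmw_le (k + 1)
        omega
    · push_neg at hA
      have alt : ∀ i, i ≤ m → tmw (j + i) = (tmw j + i) % 2 := by
        intro i
        induction i with
        | zero => intro _; have := tmw_le j; simp; omega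
        | succ i ih =>
          intro hi
          have hi' := ih (by omega)
          have hk := hA (j + i) (by omega) (by omega)
          rw [show j + (i + 1) = j + i + 1 by omega]
          have := tmw_le (j + i); have := tmw_le (j + i + 1); have := tmw_le j
          omega
      have h0 := H 0 (by omega)
      have hm2 := alt m (le_refl m)
      rw [show j + 0 = j by omega, show j + m + 0 = j + m by omega] at h0
      have := tmw_le j; have := tmw_le (j + m)
      omega

theorem vtm_sqf (m j : ℕ) (hm : 0 < m) : ∃ d, d < m ∧ vtm (j + d) ≠ vtm (j + d + m) := by
  by_contra hcon
  push_neg at hcon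
  have claim2 : ∀ i, i ≤ m → tmw (j + i) + tmw (j + m) = tmw (j + i + m) + tmw j := by
    intro i hi
    induction i with
    | zero =>
      rw [show j + 0 + m = j + m by omega, show j + 0 = j by omega]
      omega
    | succ i ih =>
      have ih' := ih (by omega)
      have hF := hcon i (by omega)
      rw [vtm_eq, vtm_eq] at hF
      rw [show j + (i + 1) + m = j + i + m + 1 by omega, show j + (i + 1) = j + i + 1 by omega]
      have := tmw_le (j + i); have := tmw_le (j + i + 1)
      have := tmw_le (j + i + m); have := tmw_le (j + i + m + 1)
      have := tmw_le j; have := tmw_le (j + m)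
      omega
  by_cases heq : tmw j = tmw (j + m)
  · apply tmw_of m hm j
    intro i hi
    have hc := claim2 i hi
    rw [show j + m + i = j + i + m by omega]
    have := tmw_le (j + i); have := tmw_le (j + i + m)
    omega
  · have hc := claim2 m (le_refl m)
    have := tmw_le j; have := tmw_le (j + m); have := tmw_le (j + m + m)
    omega

def g (a l : ℕ) : ℕ := (hImg a).getD l 0

abbrev compat (a b : ℕ) : Prop := a = b ∨ a = 2 ∨ b = 2

def f4 (a0 a1 a2 a3 x : ℕ) : ℕ :=
  if x = 0 then a0 else if x = 1 then a1 else if x = 2 then a2 else a3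

lemma mid : ∀ a < 3, ∀ b < 3, compat (g a 1) (g b 1) → compat (g a 2) (g b 2) → a = b := by decide

lemma pre2 : ∀ a < 3, ∀ b < 3, compat (g a 0) (g b 0) → compat (g a 1) (g b 1) → a = b := by decide

set_option synthInstance.maxSize 60000 in
set_option synthInstance.maxHeartbeats 2000000 in
set_option maxHeartbeats 4000000 in
lemma mis5 : ∀ a0 < 3, ∀ a1 < 3, ∀ a2 < 3, ∀ a3 < 3, ∀ r < 4,
    a0 = a1 ∨ a1 = a2 ∨ a2 = a3 ∨
    ∃ i < 5, ¬ compat (g (f4 a0 a1 a2 a3 ((r+i)/4)) ((r+i)%4))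
      (g (f4 a0 a1 a2 a3 ((r+i+5)/4)) ((r+i+5)%4)) := by decide

set_option synthInstance.maxSize 60000 in
set_option synthInstance.maxHeartbeats 2000000 in
set_option maxHeartbeats 4000000 in
lemma mis6 : ∀ a0 < 3, ∀ a1 < 3, ∀ a2 < 3, ∀ a3 < 3, ∀ r < 4,
    a0 = a1 ∨ a1 = a2 ∨ a2 = a3 ∨
    ∃ i < 6, ¬ compat (g (f4 a0 a1 a2 a3 ((r+i)/4)) ((r+i)%4))
      (g (f4 a0 a1 a2 a3 ((r+i+6)/4)) ((r+i+6)%4)) := by decide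

set_option synthInstance.maxSize 60000 in
set_option synthInstance.maxHeartbeats 2000000 in
set_option maxHeartbeats 4000000 in
lemma mis7 : ∀ a0 < 3, ∀ a1 < 3, ∀ a2 < 3, ∀ b0 < 3, ∀ b1 < 3, ∀ b2 < 3, ∀ r < 4, ∀ r' < 4,
    a0 = a1 ∨ a1 = a2 ∨ b0 = b1 ∨ b1 = b2 ∨ r = r' ∨
    ∃ i < 7, ¬ compat (g (f4 a0 a1 a2 0 ((r+i)/4)) ((r+i)%4))
        (g (f4 b0 b1 b2 0 ((r'+i)/4)) ((r'+i)%4)) := by decide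

lemma hvtm_blk (x l : ℕ) (hl : l < 4) : hvtm (4 * x + l) = g (vtm x) l := by
  unfold hvtm g
  rw [show (4 * x + l) / 4 = x by omega, show (4 * x + l) % 4 = l by omega]

/-- h(vtm) avoids squares of order ≥ 4. -/
theorem stmt7 :
    ¬ ∃ j n : ℕ, 4 ≤ n ∧ ∀ i, i < n →
      (hvtm (j+i) = hvtm (j+n+i) ∨ hvtm (j+i) = 2 ∨ hvtm (j+n+i) = 2) := by
  rintro ⟨j, n, hn4, H⟩
  by_cases h4 : n % 4 = 0
  · -- aligned case: reduce to a square in vtm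
    obtain ⟨m, rfl⟩ : ∃ m, n = 4 * m := ⟨n / 4, by omega⟩
    have hm : 0 < m := by omega
    by_cases hj2 : j % 4 = 2
    · set K := j / 4 + 1 with hK
      have hEq : ∀ d, d < m → vtm (K + d) = vtm (K + d + m) := by
        intro d hd
        have h0 := H (4 * (K + d) + 0 - j) (by omega)
        have h1 := H (4 * (K + d) + 1 - j) (by omega)
        rw [show j + (4 * (K + d) + 0 - j) = 4 * (K + d) + 0 by omega,
          show j + 4 * m + (4 * (K + d) + 0 - j) = 4 * (K + d + m) + 0 by omega,
          hvtm_blk (K + d) 0 (by omega), hvtm_blk (K + d + m) 0 (by omega)] at h0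
        rw [show j + (4 * (K + d) + 1 - j) = 4 * (K + d) + 1 by omega,
          show j + 4 * m + (4 * (K + d) + 1 - j) = 4 * (K + d + m) + 1 by omega,
          hvtm_blk (K + d) 1 (by omega), hvtm_blk (K + d + m) 1 (by omega)] at h1
        exact pre2 _ (by have := vtm_le (K + d); omega) _
          (by have := vtm_le (K + d + m); omega) h0 h1
      obtain ⟨d, hd, hne⟩ := vtm_sqf m K hm
      exact hne (hEq d hd)
    · set K := (j + 2) / 4 with hK
      have hEq : ∀ d, d < m → vtm (K + d) = vtm (K + d + m) := by
        intro d hd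
        have h1 := H (4 * (K + d) + 1 - j) (by omega)
        have h2 := H (4 * (K + d) + 2 - j) (by omega)
        rw [show j + (4 * (K + d) + 1 - j) = 4 * (K + d) + 1 by omega,
          show j + 4 * m + (4 * (K + d) + 1 - j) = 4 * (K + d + m) + 1 by omega,
          hvtm_blk (K + d) 1 (by omega), hvtm_blk (K + d + m) 1 (by omega)] at h1
        rw [show j + (4 * (K + d) + 2 - j) = 4 * (K + d) + 2 by omega,
          show j + 4 * m + (4 * (K + d) + 2 - j) = 4 * (K + d + m) + 2 by omega,
          hvtm_blk (K + d) 2 (by omega), hvtm_blk (K + d + m) 2 (by omega)] at h2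
        exact mid _ (by have := vtm_le (K + d); omega) _
          (by have := vtm_le (K + d + m); omega) h1 h2
      obtain ⟨d, hd, hne⟩ := vtm_sqf m K hm
      exact hne (hEq d hd)
  · -- misaligned case
    have a01 : vtm (j / 4) ≠ vtm (j / 4 + 1) := vtm_ne_succ (j / 4)
    have a12 : vtm (j / 4 + 1) ≠ vtm (j / 4 + 2) := by
      have := vtm_ne_succ (j / 4 + 1)
      rwa [show j / 4 + 1 + 1 = j / 4 + 2 by omega] at this
    have a23 : vtm (j / 4 + 2) ≠ vtm (j / 4 + 3) := by
      have := vtm_ne_succ (j / 4 + 2)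
      rwa [show j / 4 + 2 + 1 = j / 4 + 3 by omega] at this
    by_cases h5 : n = 5
    · subst h5
      have hm5 := mis5 (vtm (j / 4)) (by have := vtm_le (j / 4); omega)
        (vtm (j / 4 + 1)) (by have := vtm_le (j / 4 + 1); omega)
        (vtm (j / 4 + 2)) (by have := vtm_le (j / 4 + 2); omega)
        (vtm (j / 4 + 3)) (by have := vtm_le (j / 4 + 3); omega)
        (j % 4) (by omega)
      rcases hm5 with h | h | h | ⟨i, hi, hinc⟩
      · exact a01 h
      · exact a12 h
      · exact a23 h
      · have hH := H i (by omega)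
        rw [show j + i = 4 * (j / 4 + (j % 4 + i) / 4) + (j % 4 + i) % 4 by omega,
          show j + 5 + i = 4 * (j / 4 + (j % 4 + i + 5) / 4) + (j % 4 + i + 5) % 4 by omega,
          hvtm_blk (j / 4 + (j % 4 + i) / 4) ((j % 4 + i) % 4) (by omega),
          hvtm_blk (j / 4 + (j % 4 + i + 5) / 4) ((j % 4 + i + 5) % 4) (by omega)] at hH
        apply hinc
        have q1 : f4 (vtm (j / 4)) (vtm (j / 4 + 1)) (vtm (j / 4 + 2)) (vtm (j / 4 + 3))
            ((j % 4 + i) / 4) = vtm (j / 4 + (j % 4 + i) / 4) := by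
          have hx : (j % 4 + i) / 4 = 0 ∨ (j % 4 + i) / 4 = 1 ∨ (j % 4 + i) / 4 = 2 := by omega
          rcases hx with h | h | h <;> rw [h] <;> simp [f4]
        have q2 : f4 (vtm (j / 4)) (vtm (j / 4 + 1)) (vtm (j / 4 + 2)) (vtm (j / 4 + 3))
            ((j % 4 + i + 5) / 4) = vtm (j / 4 + (j % 4 + i + 5) / 4) := by
          have hx : (j % 4 + i + 5) / 4 = 0 ∨ (j % 4 + i + 5) / 4 = 1 ∨
            (j % 4 + i + 5) / 4 = 2 ∨ (j % 4 + i + 5) / 4 = 3 := by omega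
          rcases hx with h | h | h | h <;> rw [h] <;> simp [f4]
        rw [q1, q2]
        exact hH
    · by_cases h6 : n = 6
      · subst h6
        have hm6 := mis6 (vtm (j / 4)) (by have := vtm_le (j / 4); omega)
          (vtm (j / 4 + 1)) (by have := vtm_le (j / 4 + 1); omega)
          (vtm (j / 4 + 2)) (by have := vtm_le (j / 4 + 2); omega)
          (vtm (j / 4 + 3)) (by have := vtm_le (j / 4 + 3); omega)
          (j % 4) (by omega)
        rcases hm6 with h | h | h | ⟨i, hi, hinc⟩
        · exact a01 h
        · exact a12 h
        · exact a23 h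
        · have hH := H i (by omega)
          rw [show j + i = 4 * (j / 4 + (j % 4 + i) / 4) + (j % 4 + i) % 4 by omega,
            show j + 6 + i = 4 * (j / 4 + (j % 4 + i + 6) / 4) + (j % 4 + i + 6) % 4 by omega,
            hvtm_blk (j / 4 + (j % 4 + i) / 4) ((j % 4 + i) % 4) (by omega),
            hvtm_blk (j / 4 + (j % 4 + i + 6) / 4) ((j % 4 + i + 6) % 4) (by omega)] at hH
          apply hinc
          have q1 : f4 (vtm (j / 4)) (vtm (j / 4 + 1)) (vtm (j / 4 + 2)) (vtm (j / 4 + 3))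
              ((j % 4 + i) / 4) = vtm (j / 4 + (j % 4 + i) / 4) := by
            have hx : (j % 4 + i) / 4 = 0 ∨ (j % 4 + i) / 4 = 1 ∨ (j % 4 + i) / 4 = 2 := by omega
            rcases hx with h | h | h <;> rw [h] <;> simp [f4]
          have q2 : f4 (vtm (j / 4)) (vtm (j / 4 + 1)) (vtm (j / 4 + 2)) (vtm (j / 4 + 3))
              ((j % 4 + i + 6) / 4) = vtm (j / 4 + (j % 4 + i + 6) / 4) := by
            have hx : (j % 4 + i + 6) / 4 = 1 ∨ (j % 4 + i + 6) / 4 = 2 ∨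
              (j % 4 + i + 6) / 4 = 3 := by omega
            rcases hx with h | h | h <;> rw [h] <;> simp [f4]
          rw [q1, q2]
          exact hH
      · -- n ≥ 7
        have hn7 : 7 ≤ n := by omega
        have b01 : vtm ((j + n) / 4) ≠ vtm ((j + n) / 4 + 1) := vtm_ne_succ _
        have b12 : vtm ((j + n) / 4 + 1) ≠ vtm ((j + n) / 4 + 2) := by
          have := vtm_ne_succ ((j + n) / 4 + 1)
          rwa [show (j + n) / 4 + 1 + 1 = (j + n) / 4 + 2 by omega] at this
        have hm7 := mis7 (vtm (j / 4)) (by have := vtm_le (j / 4); omega)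
          (vtm (j / 4 + 1)) (by have := vtm_le (j / 4 + 1); omega)
          (vtm (j / 4 + 2)) (by have := vtm_le (j / 4 + 2); omega)
          (vtm ((j + n) / 4)) (by have := vtm_le ((j + n) / 4); omega)
          (vtm ((j + n) / 4 + 1)) (by have := vtm_le ((j + n) / 4 + 1); omega)
          (vtm ((j + n) / 4 + 2)) (by have := vtm_le ((j + n) / 4 + 2); omega)
          (j % 4) (by omega) ((j + n) % 4) (by omega)
        rcases hm7 with h | h | h | h | h | ⟨i, hi, hinc⟩
        · exact a01 h
        · exact a12 h
        · exact b01 h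
        · exact b12 h
        · exact absurd h (by omega)
        · have hH := H i (by omega)
          rw [show j + i = 4 * (j / 4 + (j % 4 + i) / 4) + (j % 4 + i) % 4 by omega,
            show j + n + i =
              4 * ((j + n) / 4 + ((j + n) % 4 + i) / 4) + ((j + n) % 4 + i) % 4 by omega,
            hvtm_blk (j / 4 + (j % 4 + i) / 4) ((j % 4 + i) % 4) (by omega),
            hvtm_blk ((j + n) / 4 + ((j + n) % 4 + i) / 4) (((j + n) % 4 + i) % 4)
              (by omega)] at hH
          apply hinc
          have q1 : f4 (vtm (j / 4)) (vtm (j / 4 + 1)) (vtm (j / 4 + 2)) 0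
              ((j % 4 + i) / 4) = vtm (j / 4 + (j % 4 + i) / 4) := by
            have hx : (j % 4 + i) / 4 = 0 ∨ (j % 4 + i) / 4 = 1 ∨ (j % 4 + i) / 4 = 2 := by omega
            rcases hx with h | h | h <;> rw [h] <;> simp [f4]
          have q2 : f4 (vtm ((j + n) / 4)) (vtm ((j + n) / 4 + 1)) (vtm ((j + n) / 4 + 2)) 0
              (((j + n) % 4 + i) / 4) = vtm ((j + n) / 4 + ((j + n) % 4 + i) / 4) := by
            have hx : ((j + n) % 4 + i) / 4 = 0 ∨ ((j + n) % 4 + i) / 4 = 1 ∨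
              ((j + n) % 4 + i) / 4 = 2 := by omega
            rcases hx with h | h | h <;> rw [h] <;> simp [f4]
          rw [q1, q2]
          exact hH
end

section
/- The word vtm, the fixed point starting with 0 of the morphism 0↦012, 1↦02, 2↦1 on {0,1,2}, is squarefree: it contains no nonempty factor of the form xx. -/
/-- Thue-Morse sequence. -/
def tm (n : ℕ) : Bool :=
  if h : n = 0 then false
  else (decide (n % 2 = 1)).xor (tm (n / 2))
decreasing_by exact Nat.div_lt_self (Nat.pos_of_ne_zero h) one_lt_two

lemma tm_zero : tm 0 = false := by rw [tm]; simp

lemma tm_even (m : ℕ) : tm (2 * m) = tm m := by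
  rcases Nat.eq_zero_or_pos m with h | h
  · simp [h]
  · rw [tm]
    simp [Nat.mul_div_cancel_left _ (by norm_num : 0 < 2), Nat.mul_mod_right, h.ne']

lemma tm_odd (m : ℕ) : tm (2 * m + 1) = !(tm m) := by
  rw [tm]
  have h1 : (2 * m + 1) % 2 = 1 := by omega
  have h2 : (2 * m + 1) / 2 = m := by omega
  simp [h1, h2]

lemma tm_adj (m : ℕ) : tm (2 * m) ≠ tm (2 * m + 1) := by
  rw [tm_even, tm_odd]; cases tm m <;> simp

lemma tm_ne_of_eq_succ {r : ℕ} (h : tm r = tm (r+1)) (he : r % 2 = 0) : False := by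
  have hr : r = 2 * (r / 2) := by omega
  rw [hr] at h
  exact tm_adj _ h

theorem tm_no_overlap : ∀ n, 0 < n → ∀ j, ¬ (∀ i, i ≤ n → tm (j + n + i) = tm (j + i)) := by
  intro n
  induction n using Nat.strong_induction_on with
  | _ n IH =>
  intro hn j H
  rcases Nat.even_or_odd n with ⟨q, hq⟩ | ⟨q, hq⟩
  · -- n = 2q even
    have hq' : n = 2 * q := by omega
    have hqpos : 0 < q := by omega
    apply IH q (by omega) hqpos (j / 2)
    intro i hi
    have h := H (2 * i) (by omega)
    rcases Nat.mod_two_eq_zero_or_one j with hr | hr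
    · have e1 : j + n + 2 * i = 2 * (j / 2 + q + i) := by omega
      have e2 : j + 2 * i = 2 * (j / 2 + i) := by omega
      rwa [e1, e2, tm_even, tm_even] at h
    · have e1 : j + n + 2 * i = 2 * (j / 2 + q + i) + 1 := by omega
      have e2 : j + 2 * i = 2 * (j / 2 + i) + 1 := by omega
      rw [e1, e2, tm_odd, tm_odd] at h
      simpa using h
  · -- n = 2q + 1 odd
    rcases Nat.eq_zero_or_pos q with hq0 | hqpos
    · -- n = 1
      subst hq0
      have hn1 : n = 1 := by omega
      subst hn1
      have h0 := H 0 (by omega)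
      have h1 := H 1 (by omega)
      simp only [Nat.add_zero] at h0
      rcases Nat.even_or_odd j with ⟨a, ha⟩ | ⟨a, ha⟩
      · exact tm_ne_of_eq_succ h0.symm (by omega)
      · exact tm_ne_of_eq_succ (h1.symm : tm (j+1) = tm (j+1+1)) (by omega)
    · -- n = 2q+1, q ≥ 1
      have hn' : n = 2 * q + 1 := by omega
      have lemA : ∀ m, j ≤ 2 * m → 2 * m + 1 ≤ j + n → tm (m + q) = tm (m + q + 1) := by
        intro m hm1 hm2
        have h1 := H (2 * m - j) (by omega)
        have h2 := H (2 * m + 1 - j) (by omega)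
        have e1 : j + n + (2 * m - j) = 2 * (m + q) + 1 := by omega
        have e2 : j + (2 * m - j) = 2 * m := by omega
        have e3 : j + n + (2 * m + 1 - j) = 2 * (m + q + 1) := by omega
        have e4 : j + (2 * m + 1 - j) = 2 * m + 1 := by omega
        rw [e1, e2, tm_odd, tm_even] at h1
        rw [e3, e4, tm_even, tm_odd] at h2
        cases hmm : tm m <;> rw [hmm] at h1 h2 <;>
          simp at h1 h2 <;> rw [show m + q + 1 = m + 1 + q by ring] at h2 ⊢ <;>
          simp [h1, h2]
      have lemB : ∀ m, j ≤ 2 * m + 1 → 2 * m + 2 ≤ j + n → tm m = tm (m + 1) := by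
        intro m hm1 hm2
        have h1 := H (2 * m + 1 - j) (by omega)
        have h2 := H (2 * m + 2 - j) (by omega)
        have e1 : j + n + (2 * m + 1 - j) = 2 * (m + q + 1) := by omega
        have e2 : j + (2 * m + 1 - j) = 2 * m + 1 := by omega
        have e3 : j + n + (2 * m + 2 - j) = 2 * (m + q + 1) + 1 := by omega
        have e4 : j + (2 * m + 2 - j) = 2 * (m + 1) := by omega
        rw [e1, e2, tm_even, tm_odd] at h1
        rw [e3, e4, tm_odd, tm_even] at h2
        cases hmm : tm (m + q + 1) <;> rw [hmm] at h1 h2 <;> simp at h1 h2 <;>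
          simp [h1, ← h2]
      rcases Nat.even_or_odd j with ⟨a, ha⟩ | ⟨a, ha⟩
      · have ha' : j = 2 * a := by omega
        rcases Nat.even_or_odd (a + q) with ⟨s, hs⟩ | ⟨s, hs⟩
        · exact tm_ne_of_eq_succ (lemA a (by omega) (by omega)) (by omega)
        · have := lemA (a + 1) (by omega) (by omega)
          rw [show a + 1 + q = a + q + 1 by ring] at this
          exact tm_ne_of_eq_succ this (by omega)
      · have ha' : j = 2 * a + 1 := by omega
        rcases Nat.even_or_odd a with ⟨s, hs⟩ | ⟨s, hs⟩
        · exact tm_ne_of_eq_succ (lemB a (by omega) (by omega)) (by omega)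
        · exact tm_ne_of_eq_succ (lemB (a + 1) (by omega) (by omega)) (by omega)

lemma tm_even' (m : ℕ) : tm (2 * m + 2) = tm (m + 1) := by
  rw [show 2 * m + 2 = 2 * (m + 1) by ring, tm_even]

lemma tm_odd' (m : ℕ) : tm (2 * m + 3) = !tm (m + 1) := by
  rw [show 2 * m + 3 = 2 * (m + 1) + 1 by ring, tm_odd]

def W (n : ℕ) : ℕ := if tm n = tm (n + 1) then 1 else if tm (n + 1) then 0 else 2

lemma vtmIter_append (a b : List ℕ) : vtmIter (a ++ b) = vtmIter a ++ vtmIter b := by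
  simp [vtmIter]

lemma map_range_succ (f : ℕ → ℕ) (n : ℕ) :
    List.map f (List.range (n + 1)) = List.map f (List.range n) ++ [f n] := by
  simp [List.range_succ]

lemma map_range_add (f : ℕ → ℕ) (n k : ℕ) :
    List.map f (List.range (n + k)) = List.map f (List.range n) ++ List.map (fun i => f (n + i)) (List.range k) := by
  rw [List.range_add, List.map_append, List.map_map]
  rfl

lemma key : ∀ m, vtmIter (List.map W (List.range m)) =
    List.map W (List.range (2 * m + (if tm m then 1 else 0))) := by
  intro m
  induction m with
  | zero => simp [vtmIter, tm_zero]
  | succ m IH =>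
    rw [List.range_succ, List.map_append, vtmIter_append, IH]
    cases hm : tm m <;> cases h1 : tm (m + 1) <;>
      simp only [hm, h1, if_true, if_false, Nat.add_zero, Bool.false_eq_true, Bool.true_eq_false]
    · -- ff ff : W m = 1, block [0,2]
      have hWm : W m = 1 := by simp [W, hm, h1]
      have w0 : W (2 * m) = 0 := by simp [W, tm_even, tm_odd, hm]
      have w1 : W (2 * m + 1) = 2 := by
        simp [W, show 2*m+1+1 = 2*m+2 by ring, tm_odd, tm_even', hm, h1]
      conv_rhs => rw [show 2 * (m + 1) = 2 * m + 2 by ring, map_range_add]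
      congr 1
      simp [vtmIter, hWm, List.range_succ, w0, w1]
    · -- ff tt : W m = 0, block [0,1,2]
      have hWm : W m = 0 := by simp [W, hm, h1]
      have w0 : W (2 * m) = 0 := by simp [W, tm_even, tm_odd, hm]
      have w1 : W (2 * m + 1) = 1 := by
        simp [W, show 2*m+1+1 = 2*m+2 by ring, tm_odd, tm_even', hm, h1]
      have w2 : W (2 * m + 2) = 2 := by
        simp [W, show 2*m+2+1 = 2*m+3 by ring, tm_even', tm_odd', h1]
      conv_rhs => rw [show 2 * (m + 1) + 1 = 2 * m + 3 by ring, map_range_add]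
      congr 1
      simp [vtmIter, hWm, List.range_succ, w0, w1, w2]
    · -- tt ff : W m = 2, block [1]
      have hWm : W m = 2 := by simp [W, hm, h1]
      have w1 : W (2 * m + 1) = 1 := by
        simp [W, show 2*m+1+1 = 2*m+2 by ring, tm_odd, tm_even', hm, h1]
      conv_rhs => rw [show 2 * (m + 1) = (2 * m + 1) + 1 by ring, map_range_add]
      congr 1
      simp [vtmIter, hWm, List.range_succ, w1]
    · -- tt tt : W m = 1, block [0,2]
      have hWm : W m = 1 := by simp [W, hm, h1]
      have w1 : W (2 * m + 1) = 0 := by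
        simp [W, show 2*m+1+1 = 2*m+2 by ring, tm_odd, tm_even', hm, h1]
      have w2 : W (2 * m + 2) = 2 := by
        simp [W, show 2*m+2+1 = 2*m+3 by ring, tm_even', tm_odd', h1]
      conv_rhs => rw [show 2 * (m + 1) + 1 = (2 * m + 1) + 2 by ring, map_range_add]
      congr 1
      simp [vtmIter, hWm, List.range_succ, w1, w2]

lemma tm_one : tm 1 = true := by
  rw [show (1:ℕ) = 2*0+1 from rfl, tm_odd, tm_zero]; rfl

lemma tm_two : tm 2 = true := by
  rw [show (2:ℕ) = 2*1 from rfl, tm_even, tm_one]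

lemma tm_three : tm 3 = false := by
  rw [show (3:ℕ) = 2*1+1 from rfl, tm_odd, tm_one]; rfl

lemma tm_three_pow (k : ℕ) : tm (3 * 2 ^ k) = false := by
  induction k with
  | zero => simpa using tm_three
  | succ k IH => rw [show 3 * 2 ^ (k+1) = 2 * (3 * 2 ^ k) by ring, tm_even, IH]

lemma iter_eq_s9 (k : ℕ) : vtmIter^[k+1] [0] = List.map W (List.range (3 * 2 ^ k)) := by
  induction k with
  | zero =>
    have W0 : W 0 = 0 := by simp [W, tm_zero, tm_one]
    have W1 : W 1 = 1 := by simp [W, tm_one, tm_two]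
    have W2 : W 2 = 2 := by simp [W, tm_two, tm_three]
    simp [vtmIter, List.range_succ, W0, W1, W2]
  | succ k IH =>
    rw [Function.iterate_succ_apply', IH, key, tm_three_pow]
    simp only [Bool.false_eq_true, if_false, Nat.add_zero]
    congr 1
    ring_nf
lemma vtm_eq_s9 (n : ℕ) : vtm n = W n := by
  have hn : n < 3 * 2 ^ n :=
    lt_of_lt_of_le (Nat.lt_two_pow_self (n := n)) (Nat.le_mul_of_pos_left _ (by norm_num))
  unfold vtm
  rw [iter_eq_s9, List.getD_eq_getElem _ _ (by simpa using hn)]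
  simp

def fI (k : ℕ) : ℤ := if tm k then 1 else 0

lemma fI_mem (k : ℕ) : fI k = 0 ∨ fI k = 1 := by
  unfold fI; cases tm k <;> simp

lemma fI_inj {a b : ℕ} (h : fI a = fI b) : tm a = tm b := by
  unfold fI at h
  cases ha : tm a <;> cases hb : tm b <;> rw [ha, hb] at h <;> simp_all

lemma W_step {k k' : ℕ} (h : W k = W k') :
    fI (k+1) - fI k = fI (k'+1) - fI k' := by
  unfold W at h
  unfold fI
  cases h1 : tm k <;> cases h2 : tm (k+1) <;> cases h3 : tm k' <;> cases h4 : tm (k'+1) <;>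
    rw [h1, h2, h3, h4] at h <;> simp_all

/-- vtm is squarefree. -/
theorem stmt9 :
    ¬ ∃ j n : ℕ, 0 < n ∧ ∀ i, i < n → vtm (j+i) = vtm (j+n+i) := by
  rintro ⟨j, n, hn, hsq⟩
  have hW : ∀ i, i < n → W (j+i) = W (j+n+i) := by
    intro i hi
    rw [← vtm_eq_s9, ← vtm_eq_s9]
    exact hsq i hi
  have hconst : ∀ i, i ≤ n → fI (j+n+i) - fI (j+i) = fI (j+n) - fI j := by
    intro i hi
    induction i with
    | zero => simp
    | succ i IHi =>
      have step := W_step (hW i (by omega))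
      have e1 : j + i + 1 = j + (i+1) := by ring
      have e2 : j + n + i + 1 = j + n + (i+1) := by ring
      rw [e1, e2] at step
      have := IHi (by omega)
      linarith
  have hd0 : fI (j+n) - fI j = 0 := by
    have h1 := hconst n le_rfl
    rcases fI_mem (j+n+n) with h | h <;> rcases fI_mem (j+n) with h' | h' <;>
      rcases fI_mem j with h'' | h'' <;> omega
  exact tm_no_overlap n hn j (fun i hi => fI_inj (by have := hconst i hi; omega))
end

section
/- Let ρ and σ be as above. The partial word σ(ρ^ω(0)) avoids non-trivial squares: there exist no j and n ≥ 1 such that for all i < n, w[j+i] = w[j+n+i] or w[j+i] = ⋄ or w[j+n+i] = ⋄, except for the trivial squares of order 1 of the form a⋄ or ⋄a. Equivalently, w contains no square of order n ≥ 2, and every order-1 square occurrence w[j] w[j+1] has w[j] = ⋄ or w[j+1] = ⋄ but not both positions agreeing letters. -/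
/-- The morphism ρ(0)=03, ρ(1)=12, ρ(2)=01, ρ(3)=10. -/
def rhoImg : ℕ → List ℕ
  | 0 => [0, 3]
  | 1 => [1, 2]
  | 2 => [0, 1]
  | _ => [1, 0]

/-- The fixed point ρ^ω(0). -/
def rhoW (n : ℕ) : ℕ := ((fun l => l.flatMap rhoImg)^[n+1] [0]).getD n 0


namespace Aux

def F (l : List ℕ) : List ℕ := l.flatMap rhoImg

lemma rhoImg_len (a : ℕ) : (rhoImg a).length = 2 := by
  match a with
  | 0 | 1 | 2 | (n+3) => rfl

lemma F_len (l : List ℕ) : (F l).length = 2 * l.length := by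
  induction l with
  | nil => rfl
  | cons a l ih => simp [F, List.flatMap] at ih ⊢; rw [rhoImg_len]; omega

lemma mem_rhoImg_le {a b : ℕ} (h : b ∈ rhoImg a) : b ≤ 3 := by
  match a with
  | 0 | 1 | 2 | (n+3) => simp [rhoImg] at h; omega

lemma mem_F_le {l : List ℕ} {b : ℕ} (h : b ∈ F l) : b ≤ 3 := by
  simp [F] at h
  obtain ⟨a, _, hb⟩ := h
  exact mem_rhoImg_le hb

lemma F_getD_even (l : List ℕ) (hl : ∀ a ∈ l, a ≤ 3) (i : ℕ) (hi : i < l.length) :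
    (F l).getD (2*i) 0 = (l.getD i 0) % 2 := by
  induction l generalizing i with
  | nil => simp at hi
  | cons a l ih =>
    have ha : a ≤ 3 := hl a (List.mem_cons_self (a := a) (l := l))
    have hsplit : F (a :: l) = rhoImg a ++ F l := by simp [F]
    match i with
    | 0 =>
      rw [hsplit]
      simp only [Nat.mul_zero]
      rw [List.getD_append _ _ _ _ (by rw [rhoImg_len]; omega)]
      simp only [List.getD_cons_zero]
      interval_cases a <;> decide
    | (i+1) =>
      rw [hsplit]
      have h2 : 2*(i+1) = (rhoImg a).length + 2*i := by rw [rhoImg_len]; omega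
      rw [h2, List.getD_append_right _ _ _ _ (Nat.le_add_right _ _)]
      simp only [Nat.add_sub_cancel_left, List.getD_cons_succ]
      simp only [List.length_cons] at hi
      exact ih (fun b hb => hl b (List.mem_cons_of_mem a hb)) i (by omega)

lemma F_getD_odd (l : List ℕ) (hl : ∀ a ∈ l, a ≤ 3) (i : ℕ) (hi : i < l.length) :
    (F l).getD (2*i+1) 0 = 3 - (l.getD i 0) := by
  induction l generalizing i with
  | nil => simp at hi
  | cons a l ih =>
    have ha : a ≤ 3 := hl a (List.mem_cons_self (a := a) (l := l))
    have hsplit : F (a :: l) = rhoImg a ++ F l := by simp [F]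
    match i with
    | 0 =>
      rw [hsplit]
      simp only [Nat.mul_zero, Nat.zero_add]
      rw [List.getD_append _ _ _ _ (by rw [rhoImg_len]; omega)]
      simp only [List.getD_cons_zero]
      interval_cases a <;> decide
    | (i+1) =>
      rw [hsplit]
      have h2 : 2*(i+1)+1 = (rhoImg a).length + (2*i+1) := by rw [rhoImg_len]; omega
      rw [h2, List.getD_append_right _ _ _ _ (Nat.le_add_right _ _)]
      simp only [Nat.add_sub_cancel_left, List.getD_cons_succ]
      simp only [List.length_cons] at hi
      exact ih (fun b hb => hl b (List.mem_cons_of_mem a hb)) i (by omega)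

def T (k : ℕ) : List ℕ := F^[k] [0]

lemma T_succ (k : ℕ) : T (k+1) = F (T k) := Function.iterate_succ_apply' F k [0]

lemma T_len (k : ℕ) : (T k).length = 2^k := by
  induction k with
  | zero => rfl
  | succ k ih => rw [T_succ, F_len, ih]; ring

lemma mem_T_le {k b : ℕ} (h : b ∈ T k) : b ≤ 3 := by
  match k with
  | 0 => simp [T] at h; omega
  | (k+1) => rw [T_succ] at h; exact mem_F_le h

lemma T_prefix (k : ℕ) : T k <+: T (k+1) := by
  induction k with
  | zero => exact ⟨[3], rfl⟩
  | succ k ih =>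
    rw [T_succ, T_succ]
    obtain ⟨t, ht⟩ := ih
    exact ⟨F t, by rw [← ht]; simp [F]⟩

lemma T_prefix_le {k j : ℕ} (h : k ≤ j) : T k <+: T j := by
  induction j with
  | zero =>
    have : k = 0 := by omega
    subst this; exact List.prefix_refl _
  | succ j ih =>
    rcases Nat.lt_or_ge k (j+1) with h' | h'
    · exact (ih (by omega)).trans (T_prefix j)
    · have : k = j+1 := by omega
      subst this; exact List.prefix_refl _

lemma T_getD_stable {k j n : ℕ} (hn : n < 2^k) (hkj : k ≤ j) :
    (T j).getD n 0 = (T k).getD n 0 := by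
  obtain ⟨t, ht⟩ := T_prefix_le hkj
  rw [← ht, List.getD_append _ _ _ _ (by rw [T_len]; exact hn)]

lemma rhoW_eq_T {k n : ℕ} (h : n < 2^k) : rhoW n = (T k).getD n 0 := by
  have h1 : n < 2^(n+1) := by
    calc n < 2^n := Nat.lt_two_pow_self (n := n)
    _ ≤ 2^(n+1) := Nat.pow_le_pow_right (by norm_num) (by omega)
  show (T (n+1)).getD n 0 = _
  rcases Nat.le_total k (n+1) with hle | hle
  · rw [T_getD_stable h hle]
  · rw [T_getD_stable h1 hle]

lemma rhoW_le (n : ℕ) : rhoW n ≤ 3 := by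
  have h1 : n < 2^(n+1) := by
    calc n < 2^n := Nat.lt_two_pow_self (n := n)
    _ ≤ 2^(n+1) := Nat.pow_le_pow_right (by norm_num) (by omega)
  have : rhoW n = (T (n+1)).getD n 0 := rfl
  rw [this, List.getD_eq_getElem _ _ (by rw [T_len]; exact h1)]
  exact mem_T_le (List.getElem_mem _)

lemma rhoW_even (n : ℕ) : rhoW (2*n) = rhoW n % 2 := by
  have hn : n < 2^(n+1) := by
    calc n < 2^n := Nat.lt_two_pow_self (n := n)
    _ ≤ 2^(n+1) := Nat.pow_le_pow_right (by norm_num) (by omega)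
  have h2n : 2*n < 2^(n+2) := by
    have := Nat.lt_two_pow_self (n := n)
    calc 2*n < 2*2^(n+1) := by omega
    _ = 2^(n+2) := by ring
  rw [rhoW_eq_T h2n, rhoW_eq_T hn, T_succ]
  exact F_getD_even _ (fun a ha => mem_T_le ha) n (by rw [T_len]; exact hn)

lemma rhoW_odd (n : ℕ) : rhoW (2*n+1) = 3 - rhoW n := by
  have hn : n < 2^(n+1) := by
    calc n < 2^n := Nat.lt_two_pow_self (n := n)
    _ ≤ 2^(n+1) := Nat.pow_le_pow_right (by norm_num) (by omega)
  have h2n : 2*n+1 < 2^(n+2) := by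
    have := Nat.lt_two_pow_self (n := n)
    calc 2*n+1 < 2*2^(n+1) := by omega
    _ = 2^(n+2) := by ring
  rw [rhoW_eq_T h2n, rhoW_eq_T hn, T_succ]
  exact F_getD_odd _ (fun a ha => mem_T_le ha) n (by rw [T_len]; exact hn)

end Aux


namespace Aux

lemma parity (n : ℕ) : rhoW (n+1) % 2 = if rhoW n = 0 ∨ rhoW n = 3 then 1 else 0 := by
  induction n using Nat.strong_induction_on with
  | _ n ih =>
  rcases Nat.even_or_odd n with ⟨r, hr⟩ | ⟨r, hr⟩
  · have e1 : rhoW (n+1) = 3 - rhoW r := by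
      rw [show n+1 = 2*r+1 by omega]; exact rhoW_odd r
    have e2 : rhoW n = rhoW r % 2 := by
      rw [show n = 2*r by omega]; exact rhoW_even r
    have hv : rhoW r = 0 ∨ rhoW r = 1 ∨ rhoW r = 2 ∨ rhoW r = 3 := by
      have := rhoW_le r; omega
    rw [e1, e2]
    rcases hv with hv|hv|hv|hv <;> rw [hv] <;> decide
  · have e1 : rhoW (n+1) = rhoW (r+1) % 2 := by
      rw [show n+1 = 2*(r+1) by omega]; exact rhoW_even (r+1)
    have e2 : rhoW n = 3 - rhoW r := by
      rw [show n = 2*r+1 by omega]; exact rhoW_odd r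
    have ihr := ih r (by omega)
    have hv : rhoW r = 0 ∨ rhoW r = 1 ∨ rhoW r = 2 ∨ rhoW r = 3 := by
      have := rhoW_le r; omega
    rw [e1, e2, ihr]
    rcases hv with hv|hv|hv|hv <;> rw [hv] <;> decide

lemma not23_pair (s : ℕ) (h1 : rhoW s = 2 ∨ rhoW s = 3)
    (h2 : rhoW (s+1) = 2 ∨ rhoW (s+1) = 3) : False := by
  rcases Nat.even_or_odd s with ⟨v, hv⟩ | ⟨v, hv⟩
  · have : rhoW s = rhoW v % 2 := by rw [show s = 2*v by omega]; exact rhoW_even v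
    omega
  · have : rhoW (s+1) = rhoW (v+1) % 2 := by
      rw [show s+1 = 2*(v+1) by omega]; exact rhoW_even (v+1)
    omega

/-- `rhoW` is squarefree. -/
lemma sq : ∀ m, 0 < m → ∀ q, (∀ i, i < m → rhoW (q+i) = rhoW (q+i+m)) → False := by
  intro m
  induction m using Nat.strong_induction_on with
  | _ m ih =>
  intro hm q h
  rcases Nat.even_or_odd m with ⟨m', hm'⟩ | ⟨m', hm'⟩
  · -- m = 2m' even: descend
    have hm'0 : 0 < m' := by omega
    apply ih m' (by omega) hm'0 (q/2)
    intro i hi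
    have hk1 : q ≤ 2*(q/2+i)+1 := by omega
    have hk2 : 2*(q/2+i)+1 - q < m := by omega
    have := h (2*(q/2+i)+1 - q) hk2
    rw [show q + (2*(q/2+i)+1 - q) = 2*(q/2+i)+1 by omega,
        show 2*(q/2+i)+1 + m = 2*(q/2+i+m')+1 by omega,
        rhoW_odd, rhoW_odd] at this
    have ha := rhoW_le (q/2+i)
    have hb := rhoW_le (q/2+i+m')
    omega
  · -- m odd
    by_cases h1 : m = 1
    · subst h1
      have h0 := h 0 (by omega)
      simp only [Nat.add_zero] at h0
      rcases Nat.even_or_odd q with ⟨r, hr⟩ | ⟨r, hr⟩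
      · have e1 : rhoW q = rhoW r % 2 := by rw [show q = 2*r by omega]; exact rhoW_even r
        have e2 : rhoW (q+1) = 3 - rhoW r := by
          rw [show q+1 = 2*r+1 by omega]; exact rhoW_odd r
        have := rhoW_le r
        omega
      · have e1 : rhoW q = 3 - rhoW r := by rw [show q = 2*r+1 by omega]; exact rhoW_odd r
        have e2 : rhoW (q+1) = rhoW (r+1) % 2 := by
          rw [show q+1 = 2*(r+1) by omega]; exact rhoW_even (r+1)
        have hp := parity r
        have := rhoW_le r
        have h23 : rhoW r = 2 ∨ rhoW r = 3 := by omega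
        rcases h23 with h2 | h2 <;> rw [h2] at hp <;> simp at hp <;> omega
    · -- m odd, m ≥ 3
      have hm3 : 3 ≤ m := by omega
      have h0 := h 0 (by omega)
      have h2 := h 2 (by omega)
      simp only [Nat.add_zero] at h0
      rcases Nat.even_or_odd q with ⟨r, hr⟩ | ⟨r, hr⟩
      · have e1 : rhoW q = rhoW r % 2 := by rw [show q = 2*r by omega]; exact rhoW_even r
        have e2 : rhoW (q+m) = 3 - rhoW (r+m') := by
          rw [show q+m = 2*(r+m')+1 by omega]; exact rhoW_odd _
        have e3 : rhoW (q+2) = rhoW (r+1) % 2 := by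
          rw [show q+2 = 2*(r+1) by omega]; exact rhoW_even _
        have e4 : rhoW (q+2+m) = 3 - rhoW (r+m'+1) := by
          rw [show q+2+m = 2*(r+m'+1)+1 by omega]; exact rhoW_odd _
        have ha := rhoW_le (r+m')
        have hb := rhoW_le (r+m'+1)
        apply not23_pair (r+m') (by omega)
        omega
      · have e1 : rhoW q = 3 - rhoW r := by rw [show q = 2*r+1 by omega]; exact rhoW_odd r
        have e2 : rhoW (q+m) = rhoW (r+m'+1) % 2 := by
          rw [show q+m = 2*(r+m'+1) by omega]; exact rhoW_even _
        have e3 : rhoW (q+2) = 3 - rhoW (r+1) := by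
          rw [show q+2 = 2*(r+1)+1 by omega]; exact rhoW_odd _
        have e4 : rhoW (q+2+m) = rhoW (r+m'+2) % 2 := by
          rw [show q+2+m = 2*(r+m'+2) by omega]; exact rhoW_even _
        have ha := rhoW_le r
        have hb := rhoW_le (r+1)
        apply not23_pair r (by omega)
        omega

end Aux


/-- σ(0)=320⋄, σ(1)=120⋄, σ(2)=310⋄, σ(3)=130⋄, with the hole ⋄ encoded as 4. -/
def sigImg : ℕ → List ℕ
  | 0 => [3, 2, 0, 4]
  | 1 => [1, 2, 0, 4]
  | 2 => [3, 1, 0, 4]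
  | _ => [1, 3, 0, 4]

/-- The infinite partial word σ(ρ^ω(0)), over {0,1,2,3} with hole encoded as 4. -/
def w (n : ℕ) : ℕ := (sigImg (rhoW (n / 4))).getD (n % 4) 0


namespace Aux

lemma sig0 (a : ℕ) : (sigImg a).getD 0 0 = 1 ∨ (sigImg a).getD 0 0 = 3 := by
  match a with
  | 0 => exact Or.inr rfl
  | 1 => exact Or.inl rfl
  | 2 => exact Or.inr rfl
  | (n+3) => exact Or.inl rfl

lemma sig1 (a : ℕ) :
    (sigImg a).getD 1 0 = 1 ∨ (sigImg a).getD 1 0 = 2 ∨ (sigImg a).getD 1 0 = 3 := by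
  match a with
  | 0 => exact Or.inr (Or.inl rfl)
  | 1 => exact Or.inr (Or.inl rfl)
  | 2 => exact Or.inl rfl
  | (n+3) => exact Or.inr (Or.inr rfl)

lemma sig2 (a : ℕ) : (sigImg a).getD 2 0 = 0 := by
  match a with
  | 0 | 1 | 2 | (n+3) => rfl

lemma sig3 (a : ℕ) : (sigImg a).getD 3 0 = 4 := by
  match a with
  | 0 | 1 | 2 | (n+3) => rfl

lemma sig_inj (a b : ℕ) (ha : a ≤ 3) (hb : b ≤ 3)
    (h0 : (sigImg a).getD 0 0 = (sigImg b).getD 0 0)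
    (h1 : (sigImg a).getD 1 0 = (sigImg b).getD 1 0) : a = b := by
  interval_cases a <;> interval_cases b <;> revert h0 h1 <;> decide

lemma sig1_eq (a b : ℕ) (ha : a ≤ 3) (hb : b ≤ 3)
    (h1 : (sigImg a).getD 1 0 = (sigImg b).getD 1 0) :
    a = b ∨ (a = 0 ∧ b = 1) ∨ (a = 1 ∧ b = 0) := by
  interval_cases a <;> interval_cases b <;> revert h1 <;> decide

lemma sig0_parity (a b : ℕ) (ha : a ≤ 3) (hb : b ≤ 3)
    (h0 : (sigImg a).getD 0 0 = (sigImg b).getD 0 0) : a % 2 = b % 2 := by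
  interval_cases a <;> interval_cases b <;> revert h0 <;> decide

lemma sig01_ne (a : ℕ) (ha : a ≤ 3) : (sigImg a).getD 0 0 ≠ (sigImg a).getD 1 0 := by
  interval_cases a <;> decide

lemma w_eval (p k c : ℕ) (h : p = 4*k + c) (hc : c < 4) :
    w p = (sigImg (rhoW k)).getD c 0 := by
  have h1 : p / 4 = k := by omega
  have h2 : p % 4 = c := by omega
  rw [w, h1, h2]

lemma no12 (p p' : ℕ) (hp : p % 4 = 1) (hp' : p' % 4 = 2)
    (h : w p = w p' ∨ w p = 4 ∨ w p' = 4) : False := by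
  rw [w_eval p (p/4) 1 (by omega) (by omega),
      w_eval p' (p'/4) 2 (by omega) (by omega)] at h
  have h1 := sig1 (rhoW (p/4))
  have h2 := sig2 (rhoW (p'/4))
  omega

lemma no21 (p p' : ℕ) (hp : p % 4 = 2) (hp' : p' % 4 = 1)
    (h : w p = w p' ∨ w p = 4 ∨ w p' = 4) : False := by
  rw [w_eval p (p/4) 2 (by omega) (by omega),
      w_eval p' (p'/4) 1 (by omega) (by omega)] at h
  have h1 := sig2 (rhoW (p/4))
  have h2 := sig1 (rhoW (p'/4))
  omega

lemma no02 (p p' : ℕ) (hp : p % 4 = 0) (hp' : p' % 4 = 2)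
    (h : w p = w p' ∨ w p = 4 ∨ w p' = 4) : False := by
  rw [w_eval p (p/4) 0 (by omega) (by omega),
      w_eval p' (p'/4) 2 (by omega) (by omega)] at h
  have h1 := sig0 (rhoW (p/4))
  have h2 := sig2 (rhoW (p'/4))
  omega

lemma no20 (p p' : ℕ) (hp : p % 4 = 2) (hp' : p' % 4 = 0)
    (h : w p = w p' ∨ w p = 4 ∨ w p' = 4) : False := by
  rw [w_eval p (p/4) 2 (by omega) (by omega),
      w_eval p' (p'/4) 0 (by omega) (by omega)] at h
  have h1 := sig2 (rhoW (p/4))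
  have h2 := sig0 (rhoW (p'/4))
  omega

/-- no occurrence of σ₁(t_k) letter matching σ₀(t_{k+1}) letter -/
lemma no10 (k : ℕ)
    (h : w (4*k+1) = w (4*(k+1)) ∨ w (4*k+1) = 4 ∨ w (4*(k+1)) = 4) : False := by
  rw [w_eval (4*k+1) k 1 rfl (by omega),
      w_eval (4*(k+1)) (k+1) 0 (by ring) (by omega)] at h
  have hp := parity k
  have ha := rhoW_le k
  have hb := rhoW_le (k+1)
  have hva : rhoW k = 0 ∨ rhoW k = 1 ∨ rhoW k = 2 ∨ rhoW k = 3 := by omega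
  have hvb : rhoW (k+1) = 0 ∨ rhoW (k+1) = 1 ∨ rhoW (k+1) = 2 ∨ rhoW (k+1) = 3 := by omega
  rcases hva with hv|hv|hv|hv <;> rcases hvb with hv'|hv'|hv'|hv' <;>
    rw [hv, hv'] at h hp <;> revert h hp <;> decide

/-- extraction of a residue-0 match -/
lemma ext0 {j n : ℕ} (hh : ∀ i, i < n → (w (j+i) = w (j+n+i) ∨ w (j+i) = 4 ∨ w (j+n+i) = 4))
    (k m : ℕ) (hk : j ≤ 4*k) (hi : 4*k - j < n) (hnm : n = 4*m) :
    (sigImg (rhoW k)).getD 0 0 = (sigImg (rhoW (k+m))).getD 0 0 := by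
  have h := hh (4*k - j) hi
  rw [w_eval (j + (4*k - j)) k 0 (by omega) (by omega),
      w_eval (j + n + (4*k - j)) (k+m) 0 (by omega) (by omega)] at h
  have h1 := sig0 (rhoW k)
  have h2 := sig0 (rhoW (k+m))
  omega

/-- extraction of a residue-1 match -/
lemma ext1 {j n : ℕ} (hh : ∀ i, i < n → (w (j+i) = w (j+n+i) ∨ w (j+i) = 4 ∨ w (j+n+i) = 4))
    (k m : ℕ) (hk : j ≤ 4*k+1) (hi : 4*k+1 - j < n) (hnm : n = 4*m) :
    (sigImg (rhoW k)).getD 1 0 = (sigImg (rhoW (k+m))).getD 1 0 := by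
  have h := hh (4*k+1 - j) hi
  rw [w_eval (j + (4*k+1 - j)) k 1 (by omega) (by omega),
      w_eval (j + n + (4*k+1 - j)) (k+m) 1 (by omega) (by omega)] at h
  have h1 := sig1 (rhoW k)
  have h2 := sig1 (rhoW (k+m))
  omega

end Aux

/-- σ(ρ^ω(0)) avoids non-trivial squares: no squares of order ≥ 2, and every
order-1 square occurrence is a trivial square a⋄ or ⋄a. -/
theorem stmt15 :
    (¬ ∃ j n : ℕ, 2 ≤ n ∧ ∀ i, i < n →
      (w (j+i) = w (j+n+i) ∨ w (j+i) = 4 ∨ w (j+n+i) = 4)) ∧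
    (∀ j : ℕ, (w j = w (j+1) ∨ w j = 4 ∨ w (j+1) = 4) →
      ((w j = 4 ∧ w (j+1) ≠ 4) ∨ (w j ≠ 4 ∧ w (j+1) = 4))) := by
  constructor
  · rintro ⟨j, n, hn, h⟩
    have hmod : n % 4 = 0 ∨ n % 4 = 1 ∨ n % 4 = 2 ∨ n % 4 = 3 := by omega
    rcases hmod with hmod | hmod | hmod | hmod
    · -- n ≡ 0 [4]
      obtain ⟨m, hnm⟩ : ∃ m, n = 4*m := ⟨n/4, by omega⟩
      have hm : 0 < m := by omega
      obtain ⟨q, hjq⟩ : ∃ q, j = 4*q + j % 4 := ⟨j/4, by omega⟩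
      have hjr : j % 4 = 0 ∨ j % 4 = 1 ∨ j % 4 = 2 ∨ j % 4 = 3 := by omega
      rcases hjr with hr | hr | hr | hr
      · -- j ≡ 0
        apply Aux.sq m hm q
        intro i' hi'
        have e0 := Aux.ext0 h (q+i') m (by omega) (by omega) hnm
        have e1 := Aux.ext1 h (q+i') m (by omega) (by omega) hnm
        exact Aux.sig_inj _ _ (Aux.rhoW_le _) (Aux.rhoW_le _) e0 e1
      · -- j ≡ 1
        have hy : ∀ i', i' < m →
            (sigImg (rhoW (q+i'))).getD 1 0 = (sigImg (rhoW (q+i'+m))).getD 1 0 :=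
          fun i' hi' => Aux.ext1 h (q+i') m (by omega) (by omega) hnm
        have hx : ∀ i', i' < m →
            (sigImg (rhoW (q+1+i'))).getD 0 0 = (sigImg (rhoW (q+1+i'+m))).getD 0 0 :=
          fun i' hi' => Aux.ext0 h (q+1+i') m (by omega) (by omega) hnm
        have hint : ∀ i', 1 ≤ i' → i' < m → rhoW (q+i') = rhoW (q+i'+m) := by
          intro i' h1 h2
          have e1 := hy i' h2
          have e0 := hx (i'-1) (by omega)
          rw [show q+1+(i'-1) = q+i' by omega] at e0
          exact Aux.sig_inj _ _ (Aux.rhoW_le _) (Aux.rhoW_le _) e0 e1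
        have hend := Aux.sig1_eq _ _ (Aux.rhoW_le q) (Aux.rhoW_le (q+m))
          (by have := hy 0 hm; simpa using this)
        rcases hend with heq | hsw
        · apply Aux.sq m hm q
          intro i' hi'
          rcases Nat.eq_zero_or_pos i' with h0 | h0
          · subst h0; simpa using heq
          · exact hint i' h0 hi'
        · by_cases hm1 : m = 1
          · subst hm1
            have e0 := hx 0 (by omega)
            have hpe := Aux.sig0_parity _ _ (Aux.rhoW_le _) (Aux.rhoW_le _) e0
            rw [show q+1+0 = q+1 by omega, show q+1+0+1 = q+2 by omega] at hpe
            have hp := Aux.parity (q+1)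
            rw [show q+1+1 = q+2 by omega] at hp
            rcases hsw with ⟨ha, hb⟩ | ⟨ha, hb⟩ <;> rw [hb] at hp hpe <;> simp at hp <;> omega
          · have hi1 := hint 1 (by omega) (by omega)
            have hp1 := Aux.parity q
            have hp2 := Aux.parity (q+m)
            rw [show q+1+m = q+m+1 by omega] at hi1
            rcases hsw with ⟨ha, hb⟩ | ⟨ha, hb⟩ <;>
              rw [ha] at hp1 <;> rw [hb] at hp2 <;> simp at hp1 hp2 <;> omega
      · -- j ≡ 2
        apply Aux.sq m hm (q+1)
        intro i' hi'
        have e0 := Aux.ext0 h (q+1+i') m (by omega) (by omega) hnm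
        have e1 := Aux.ext1 h (q+1+i') m (by omega) (by omega) hnm
        exact Aux.sig_inj _ _ (Aux.rhoW_le _) (Aux.rhoW_le _) e0 e1
      · -- j ≡ 3
        apply Aux.sq m hm (q+1)
        intro i' hi'
        have e0 := Aux.ext0 h (q+1+i') m (by omega) (by omega) hnm
        have e1 := Aux.ext1 h (q+1+i') m (by omega) (by omega) hnm
        exact Aux.sig_inj _ _ (Aux.rhoW_le _) (Aux.rhoW_le _) e0 e1
    · -- n ≡ 1 [4], n ≥ 5
      have hn5 : 5 ≤ n := by omega
      set i := (5 - j % 4) % 4 with hi'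
      exact Aux.no12 (j+i) (j+n+i) (by omega) (by omega) (h i (by omega))
    · -- n ≡ 2 [4]
      set i := j % 2 with hi'
      have hc : (j+i) % 4 = 0 ∨ (j+i) % 4 = 2 := by omega
      rcases hc with hc | hc
      · exact Aux.no02 (j+i) (j+n+i) hc (by omega) (h i (by omega))
      · exact Aux.no20 (j+i) (j+n+i) hc (by omega) (h i (by omega))
    · -- n ≡ 3 [4]
      by_cases hj3 : j % 4 = 3
      · by_cases hn3 : n = 3
        · -- the special case j ≡ 3, n = 3
          have hh := h 2 (by omega)
          apply Aux.no10 (j/4 + 1)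
          rw [show 4*(j/4+1)+1 = j+2 by omega, show 4*(j/4+1+1) = j+n+2 by omega]
          exact hh
        · have hn7 : 4 ≤ n := by omega
          exact Aux.no21 (j+3) (j+n+3) (by omega) (by omega) (h 3 (by omega))
      · set i := 2 - j % 4 with hi'
        exact Aux.no21 (j+i) (j+n+i) (by omega) (by omega) (h i (by omega))
  · intro j hyp
    have hjr : j % 4 = 0 ∨ j % 4 = 1 ∨ j % 4 = 2 ∨ j % 4 = 3 := by omega
    rcases hjr with hr | hr | hr | hr
    · exfalso
      rw [Aux.w_eval j (j/4) 0 (by omega) (by omega),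
          Aux.w_eval (j+1) (j/4) 1 (by omega) (by omega)] at hyp
      have h0 := Aux.sig0 (rhoW (j/4))
      have h1 := Aux.sig1 (rhoW (j/4))
      have hne := Aux.sig01_ne (rhoW (j/4)) (Aux.rhoW_le _)
      omega
    · exfalso
      rw [Aux.w_eval j (j/4) 1 (by omega) (by omega),
          Aux.w_eval (j+1) (j/4) 2 (by omega) (by omega)] at hyp
      have h1 := Aux.sig1 (rhoW (j/4))
      have h2 := Aux.sig2 (rhoW (j/4))
      omega
    · right
      rw [Aux.w_eval j (j/4) 2 (by omega) (by omega),
          Aux.w_eval (j+1) (j/4) 3 (by omega) (by omega)]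
      have h2 := Aux.sig2 (rhoW (j/4))
      have h3 := Aux.sig3 (rhoW (j/4))
      omega
    · left
      rw [Aux.w_eval j (j/4) 3 (by omega) (by omega),
          Aux.w_eval (j+1) ((j+1)/4) 0 (by omega) (by omega)]
      have h3 := Aux.sig3 (rhoW (j/4))
      have h0 := Aux.sig0 (rhoW ((j+1)/4))
      omega
end
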